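/- arXiv:2109.01260 — 3 statements merged into one kernel-verified Lean document; each statement's English description precedes it below -/
import Mathlib

section
/- Let 1 < p < ∞. If {Γ_j}_{j=1}^∞ is a sequence of families of curves in X with Γ_j ⊂ Γ_{j+1} for all j, then Mod_p(∪_{j=1}^∞ Γ_j) = lim_{j→∞} Mod_p(Γ_j). -/
open Set Metric MeasureTheory Filter ENNReal NNReal TopologicalSpace

noncomputable section

/-- A rectifiable curve parametrized by arc length: a `1`-Lipschitz map
`γ : [0, len] → X` such that the length (variation) of `γ` on `[0, t]` equals `t`. -/
structure Curve (X : Type*) [MetricSpace X] where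
  len : ℝ
  len_nonneg : 0 ≤ len
  toFun : ℝ → X
  lipschitz : LipschitzOnWith 1 toFun (Set.Icc 0 len)
  arclength : ∀ t ∈ Set.Icc (0 : ℝ) len,
    eVariationOn toFun (Set.Icc 0 t) = ENNReal.ofReal t

/-- The curve `γ` lies in the set `A`. -/
def Curve.In {X : Type*} [MetricSpace X] (γ : Curve X) (A : Set X) : Prop :=
  ∀ t ∈ Set.Icc (0 : ℝ) γ.len, γ.toFun t ∈ A

/-- The image of a curve. -/
def Curve.image {X : Type*} [MetricSpace X] (γ : Curve X) : Set X :=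
  γ.toFun '' Set.Icc (0 : ℝ) γ.len

/-- The curve integral `∫_γ ρ ds := ∫_0^{ℓ_γ} ρ(γ(s)) ds`. -/
def arcCurveIntegral {X : Type*} [MetricSpace X] (ρ : X → ℝ≥0∞) (γ : Curve X) : ℝ≥0∞ :=
  ∫⁻ s in Set.Icc (0 : ℝ) γ.len, ρ (γ.toFun s)

/-- The `p`-modulus of a family of curves. -/
def pModulus {X : Type*} [MetricSpace X] [MeasurableSpace X] (p : ℝ) (μ : Measure X)
    (Γ : Set (Curve X)) : ℝ≥0∞ :=
  ⨅ (ρ : X → ℝ≥0∞) (_ : Measurable ρ) (_ : ∀ γ ∈ Γ, 1 ≤ arcCurveIntegral ρ γ),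
    ∫⁻ x, ρ x ^ p ∂μ

/-- `g` is an upper gradient of `f` in `Ω`. -/
def IsUpperGradientOn {X Y : Type*} [MetricSpace X] [MetricSpace Y]
    (f : X → Y) (g : X → ℝ≥0∞) (Ω : Set X) : Prop :=
  ∀ γ : Curve X, γ.In Ω →
    edist (f (γ.toFun 0)) (f (γ.toFun γ.len)) ≤ arcCurveIntegral g γ

/-- `g` is a `p`-weak upper gradient of `f` in `Ω`: the upper gradient inequality
holds for `p`-a.e. curve in `Ω`. -/
def IsWeakUpperGradientOn {X Y : Type*} [MetricSpace X] [MeasurableSpace X] [MetricSpace Y]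
    (p : ℝ) (μ : Measure X) (f : X → Y) (g : X → ℝ≥0∞) (Ω : Set X) : Prop :=
  pModulus p μ {γ : Curve X | γ.In Ω ∧
    ¬ edist (f (γ.toFun 0)) (f (γ.toFun γ.len)) ≤ arcCurveIntegral g γ} = 0

/-- `f` belongs to the Dirichlet class `D^p(Ω; Y)`: it has an upper gradient in `L^p(Ω, μ)`. -/
def MemDirichlet {X Y : Type*} [MetricSpace X] [MeasurableSpace X] [MetricSpace Y]
    (p : ℝ) (μ : Measure X) (f : X → Y) (Ω : Set X) : Prop :=
  ∃ g : X → ℝ≥0∞, Measurable g ∧ IsUpperGradientOn f g Ω ∧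
    ∫⁻ x in Ω, g x ^ p ∂μ < ⊤

/-- `μt` is doubling with constant `Cd` within the open set `W`. -/
def DoublingWithinC {X : Type*} [MetricSpace X] [MeasurableSpace X]
    (μt : Measure X) (Cd : ℝ≥0) (W : Set X) : Prop :=
  ∀ (x : X) (r : ℝ), 0 < r → Metric.ball x r ⊆ W →
    0 < μt (Metric.ball x (2 * r)) ∧
      μt (Metric.ball x (2 * r)) ≤ Cd * μt (Metric.ball x r) ∧
      μt (Metric.ball x (2 * r)) < ⊤

/-- `μt` is doubling (with some constant) within the open set `W`. -/
def DoublingWithin {X : Type*} [MetricSpace X] [MeasurableSpace X]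
    (μt : Measure X) (W : Set X) : Prop :=
  ∃ Cd : ℝ≥0, DoublingWithinC μt Cd W

/-- `L_f(x,r) = sup { d_Y(f(y), f(x)) : y ∈ Ω, d(y,x) ≤ r }`. -/
def eL {X Y : Type*} [MetricSpace X] [MetricSpace Y]
    (f : X → Y) (Ω : Set X) (x : X) (r : ℝ) : ℝ≥0∞ :=
  ⨆ (y : X) (_ : y ∈ Ω) (_ : dist y x ≤ r), edist (f y) (f x)

/-- `l_f(x,r) = inf { d_Y(f(y), f(x)) : y ∈ Ω, d(y,x) ≥ r }`. -/
def el {X Y : Type*} [MetricSpace X] [MetricSpace Y]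
    (f : X → Y) (Ω : Set X) (x : X) (r : ℝ) : ℝ≥0∞ :=
  ⨅ (y : X) (_ : y ∈ Ω) (_ : r ≤ dist y x), edist (f y) (f x)

/-- `H_f(x,r) = L_f(x,r)/l_f(x,r)`, interpreted as `∞` when the denominator is zero. -/
def eH {X Y : Type*} [MetricSpace X] [MetricSpace Y]
    (f : X → Y) (Ω : Set X) (x : X) (r : ℝ) : ℝ≥0∞ :=
  if el f Ω x r = 0 then ⊤ else eL f Ω x r / el f Ω x r

/-- `h_f(x) = liminf_{r → 0} H_f(x,r)`. -/
def hDil {X Y : Type*} [MetricSpace X] [MetricSpace Y]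
    (f : X → Y) (Ω : Set X) (x : X) : ℝ≥0∞ :=
  Filter.liminf (fun r : ℝ => eH f Ω x r) (nhdsWithin 0 (Set.Ioi 0))

/-- `lip_f(x) = liminf_{r → 0} sup_{y ∈ B(x,r)} d_Y(f(y), f(x)) / r` (within `Ω`). -/
def elip {X Y : Type*} [MetricSpace X] [MetricSpace Y]
    (f : X → Y) (Ω : Set X) (x : X) : ℝ≥0∞ :=
  Filter.liminf
    (fun r : ℝ =>
      (⨆ (y : X) (_ : y ∈ Ω ∩ Metric.ball x r), edist (f y) (f x)) / ENNReal.ofReal r)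
    (nhdsWithin 0 (Set.Ioi 0))

/-- `f` is a homeomorphism from `Ω` onto `f(Ω)`. -/
def IsHomeoOn {X Y : Type*} [TopologicalSpace X] [TopologicalSpace Y]
    (f : X → Y) (Ω : Set X) : Prop :=
  ContinuousOn f Ω ∧ ∃ g : Y → X, ContinuousOn g (f '' Ω) ∧ ∀ x ∈ Ω, g (f x) = x

/-- The restricted codimension-`p` Hausdorff content with respect to `μt`. -/
def codimHContent {X : Type*} [MetricSpace X] [MeasurableSpace X]
    (μt : Measure X) (p R : ℝ) (A : Set X) : ℝ≥0∞ :=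
  ⨅ (I : Set (X × ℝ)) (_ : I.Countable) (_ : ∀ b ∈ I, 0 < b.2 ∧ b.2 ≤ R)
    (_ : A ⊆ ⋃ b ∈ I, Metric.ball b.1 b.2),
    ∑' b : I, μt (Metric.ball b.1.1 b.1.2) / ENNReal.ofReal (b.1.2 ^ p)

/-- The codimension-`p` Hausdorff measure with respect to `μt`. -/
def codimH {X : Type*} [MetricSpace X] [MeasurableSpace X]
    (μt : Measure X) (p : ℝ) (A : Set X) : ℝ≥0∞ :=
  ⨆ (R : ℝ) (_ : 0 < R), codimHContent μt p R A

/-- `E` has σ-finite codimension-`p` Hausdorff measure with respect to `μt`. -/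
def SigmaFiniteCodimH {X : Type*} [MetricSpace X] [MeasurableSpace X]
    (μt : Measure X) (p : ℝ) (E : Set X) : Prop :=
  ∃ Ek : ℕ → Set X, E ⊆ ⋃ k, Ek k ∧ ∀ k, codimH μt p (Ek k) < ⊤

/-- `μ₀` is a Vitali measure: every fine covering (by closed balls, recorded as
center–radius pairs of positive radius) of any set `A` admits a pairwise disjoint
subcollection covering `μ₀`-almost all of `A`. -/
def IsVitaliMeasure {Z : Type*} [MetricSpace Z] [MeasurableSpace Z] (μ₀ : Measure Z) : Prop :=
  ∀ (A : Set Z) (F : Set (Z × ℝ)), (∀ b ∈ F, 0 < b.2) →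
    (∀ x ∈ A, ∀ ε : ℝ, 0 < ε → ∃ r : ℝ, 0 < r ∧ r < ε ∧ (x, r) ∈ F) →
    ∃ G ⊆ F, (G.PairwiseDisjoint fun b => Metric.closedBall b.1 b.2) ∧
      μ₀ (A \ ⋃ b ∈ G, Metric.closedBall b.1 b.2) = 0

/-- Ahlfors `Q`-regularity. -/
def AhlforsRegular {Z : Type*} [MetricSpace Z] [MeasurableSpace Z]
    (μ : Measure Z) (Q : ℝ) : Prop :=
  ∃ C : ℝ≥0, 1 ≤ C ∧ ∀ (x : Z) (r : ℝ), 0 < r →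
    ENNReal.ofReal r < EMetric.diam (Set.univ : Set Z) →
    ENNReal.ofReal (r ^ Q) / C ≤ μ (Metric.ball x r) ∧
      μ (Metric.ball x r) ≤ C * ENNReal.ofReal (r ^ Q)

/-- The set `A` is metric doubling with constant `M`: each ball in `A` of radius `r`
can be covered by `M` balls in `A` of radius `r/2`. -/
def MetricDoublingWith {X : Type*} [MetricSpace X] (A : Set X) (M : ℕ) : Prop :=
  ∀ x ∈ A, ∀ r : ℝ, 0 < r → ∃ T : Finset X, ↑T ⊆ A ∧ T.card ≤ M ∧
    A ∩ Metric.ball x r ⊆ ⋃ y ∈ T, Metric.ball y (r / 2)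

end

section AuxAnalysis
open Set Real

private lemma pm33_chord {q : ℝ} (hq0 : 0 < q) (hq1 : q < 1) {s : ℝ} (h0 : 0 ≤ s) (h1 : s ≤ 1) :
    1 + (2 ^ q - 1) * s ≤ (1 + s) ^ q := by
  have h := (Real.concaveOn_rpow hq0.le hq1.le).2 (show (1:ℝ) ∈ Ici 0 by norm_num)
    (show (2:ℝ) ∈ Ici 0 by norm_num) (show (0:ℝ) ≤ 1 - s by linarith) h0 (by ring)
  simp only [smul_eq_mul] at h
  have h2 : (1 - s) * 1 + s * 2 = 1 + s := by ring
  rw [h2, Real.one_rpow] at h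
  nlinarith [h]

private lemma pm33_linlow {p : ℝ} (hp : 1 < p) :
    ∃ lam : ℝ, 0 < lam ∧ ∀ s ∈ Icc (0:ℝ) 1, 1 + lam * s ≤ (1 + s) ^ (p - 1) := by
  rcases le_or_gt 2 p with h2 | h2
  · refine ⟨p - 1, by linarith, fun s hs => ?_⟩
    have := one_add_mul_self_le_rpow_one_add (s := s) (by linarith [hs.1]) (p := p - 1) (by linarith)
    linarith [this]
  · refine ⟨2 ^ (p - 1) - 1, ?_, fun s hs => pm33_chord (by linarith) (by linarith) hs.1 hs.2⟩
    have : (1:ℝ) < 2 ^ (p - 1) := by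
      have := Real.rpow_lt_rpow_of_exponent_lt (x := 2) (by norm_num) (y := 0) (z := p - 1)
        (by linarith)
      simpa using this
    linarith

private lemma pm33_quadlow {p lam : ℝ} (hp : 1 < p) (hlam : 0 < lam)
    (hl : ∀ s ∈ Icc (0:ℝ) 1, 1 + lam * s ≤ (1 + s) ^ (p - 1)) :
    ∀ s ∈ Icc (0:ℝ) 1, 1 + p * s + (p * lam / 2) * s ^ 2 ≤ (1 + s) ^ p := by
  set F : ℝ → ℝ := fun s => (1 + s) ^ p - 1 - p * s - (p * lam / 2) * s ^ 2 with hF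
  have hderiv : ∀ s : ℝ, 0 < 1 + s →
      HasDerivAt F (p * (1 + s) ^ (p - 1) - p - (p * lam / 2) * (2 * s)) s := by
    intro s hs
    have h1 : HasDerivAt (fun s : ℝ => 1 + s) 1 s := by
      simpa using (hasDerivAt_id s).const_add 1
    have h2 : HasDerivAt (fun s : ℝ => (1 + s) ^ p) (p * (1 + s) ^ (p - 1) * 1) s :=
      (Real.hasDerivAt_rpow_const (Or.inl (ne_of_gt hs))).comp s h1
    have h3 : HasDerivAt (fun s : ℝ => (p * lam / 2) * s ^ 2) ((p * lam / 2) * (2 * s)) s := by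
      simpa [mul_comm, mul_assoc] using ((hasDerivAt_pow 2 s).const_mul (p * lam / 2))
    have := ((h2.sub_const 1).sub ((hasDerivAt_id s).const_mul p)).sub h3
    simp only [mul_one] at this
    exact this
  have hmono : MonotoneOn F (Icc (0:ℝ) 1) := by
    apply monotoneOn_of_deriv_nonneg (convex_Icc 0 1)
    · apply ContinuousOn.sub (ContinuousOn.sub (ContinuousOn.sub ?_ continuousOn_const) ?_) ?_
      · exact ContinuousOn.rpow_const (by fun_prop)
          (fun x hx => Or.inl (by simp at hx; nlinarith [hx.1]))
      · fun_prop
      · fun_prop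
    · intro x hx
      rw [interior_Icc] at hx
      exact ((hderiv x (by nlinarith [hx.1])).differentiableAt).differentiableWithinAt
    · intro x hx
      rw [interior_Icc] at hx
      rw [(hderiv x (by nlinarith [hx.1])).deriv]
      have := hl x ⟨hx.1.le, hx.2.le⟩
      have hp0 : 0 < p := by linarith
      nlinarith [this, hx.1]
  intro s hs
  have h0 : F 0 ≤ F s := hmono (left_mem_Icc.2 zero_le_one) hs hs.1
  simp [hF] at h0
  nlinarith [h0]

private lemma pm33_philow {p lam : ℝ} (hp : 1 < p) (hlam : 0 < lam)
    (hl : ∀ s ∈ Icc (0:ℝ) 1, 1 + lam * s ≤ (1 + s) ^ (p - 1)) :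
    ∀ s ∈ Icc (0:ℝ) 1, 1 + (p * lam / 4) * s ^ 2 ≤ ((1 + s) ^ p + (1 - s) ^ p) / 2 := by
  intro s hs
  have h1 := pm33_quadlow hp hlam hl s hs
  have h2 : 1 + p * (-s) ≤ (1 + (-s)) ^ p :=
    one_add_mul_self_le_rpow_one_add (by linarith [hs.2]) hp.le
  have h3 : (1 + -s) = (1 - s) := by ring
  rw [h3] at h2
  linarith

private lemma pm33_realClarksonAux {p c1 : ℝ} (hp : 1 < p) (hc1 : 0 < c1)
    (hphi : ∀ s ∈ Icc (0:ℝ) 1, 1 + c1 * s ^ 2 ≤ ((1 + s) ^ p + (1 - s) ^ p) / 2)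
    {A B : ℝ} (hB : 0 ≤ B) (hBA : B ≤ A) (hT : 0 < A + B) :
    ((A + B) / 2) ^ p + (c1 / 2 ^ p) * |A - B| ^ 2 * (A + B) ^ (p - 2)
      ≤ (A ^ p + B ^ p) / 2 := by
  set T : ℝ := A + B with hTdef
  set s : ℝ := (A - B) / T with hsdef
  have hs0 : 0 ≤ s := div_nonneg (by linarith) hT.le
  have hs1 : s ≤ 1 := by
    rw [div_le_one hT]; linarith
  have hsT : s * T = A - B := by rw [hsdef]; exact div_mul_cancel₀ _ hT.ne'
  have hA : A = (T / 2) * (1 + s) := by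
    linear_combination (-1/2) * hsT + (-1/2) * hTdef
  have hB' : B = (T / 2) * (1 - s) := by
    linear_combination (1/2) * hsT + (-1/2) * hTdef
  have hT2 : (0:ℝ) ≤ T / 2 := by linarith
  have hAp : A ^ p = (T / 2) ^ p * (1 + s) ^ p := by
    rw [hA, Real.mul_rpow hT2 (by linarith)]
  have hBp : B ^ p = (T / 2) ^ p * (1 - s) ^ p := by
    rw [hB', Real.mul_rpow hT2 (by linarith)]
  have hphi' := hphi s ⟨hs0, hs1⟩
  have hTp : 0 < (T / 2) ^ p := Real.rpow_pos_of_pos (by linarith) p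
  have key : (T / 2) ^ p * (1 + c1 * s ^ 2) ≤ (A ^ p + B ^ p) / 2 := by
    rw [hAp, hBp]
    calc (T / 2) ^ p * (1 + c1 * s ^ 2) ≤ (T / 2) ^ p * (((1 + s) ^ p + (1 - s) ^ p) / 2) :=
          mul_le_mul_of_nonneg_left hphi' hTp.le
      _ = ((T / 2) ^ p * (1 + s) ^ p + (T / 2) ^ p * (1 - s) ^ p) / 2 := by ring
  have habs : |A - B| = A - B := abs_of_nonneg (by linarith)
  have hTpow : (T / 2) ^ p = T ^ p / 2 ^ p := Real.div_rpow hT.le (by norm_num : (0:ℝ) ≤ 2) p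
  have hTsub : T ^ (p - 2) = T ^ p / T ^ (2:ℝ) := Real.rpow_sub hT p 2
  have hT2eq : T ^ (2:ℝ) = T ^ (2:ℕ) := by
    rw [← Real.rpow_natCast T 2]; norm_num
  have heq : (c1 / 2 ^ p) * |A - B| ^ 2 * T ^ (p - 2) = (T / 2) ^ p * (c1 * s ^ 2) := by
    rw [habs, hTsub, hT2eq, hTpow, hsdef]
    field_simp
  calc ((A + B) / 2) ^ p + (c1 / 2 ^ p) * |A - B| ^ 2 * (A + B) ^ (p - 2)
      = (T / 2) ^ p * (1 + c1 * s ^ 2) := by rw [← hTdef, heq]; ring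
    _ ≤ (A ^ p + B ^ p) / 2 := key

private lemma pm33_realClarkson {p : ℝ} (hp : 1 < p) :
    ∃ c : ℝ, 0 < c ∧ ∀ A B : ℝ, 0 ≤ A → 0 ≤ B →
      ((A + B) / 2) ^ p + c * |A - B| ^ 2 * (A + B) ^ (p - 2) ≤ (A ^ p + B ^ p) / 2 := by
  obtain ⟨lam, hlam, hl⟩ := pm33_linlow hp
  have hc1 : 0 < p * lam / 4 := by positivity
  refine ⟨(p * lam / 4) / 2 ^ p, by positivity, fun A B hA hB => ?_⟩
  rcases eq_or_lt_of_le (by linarith : (0:ℝ) ≤ A + B) with h0 | h0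
  · have hA0 : A = 0 := by linarith [abs_nonneg (A - B)]
    have hB0 : B = 0 := by linarith
    simp [hA0, hB0, Real.zero_rpow (show p ≠ 0 by linarith)]
  · have sym : ∀ A B : ℝ, 0 ≤ B → B ≤ A → 0 < A + B →
        ((A + B) / 2) ^ p + (p * lam / 4 / 2 ^ p) * |A - B| ^ 2 * (A + B) ^ (p - 2)
          ≤ (A ^ p + B ^ p) / 2 :=
      fun A B h1 h2 h3 => pm33_realClarksonAux hp hc1 (pm33_philow hp hlam hl) h1 h2 h3
    rcases le_total B A with hBA | hAB
    · exact sym A B hB hBA h0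
    · have := sym B A hA hAB (by linarith)
      have e1 : B + A = A + B := by ring
      have e2 : |B - A| = |A - B| := abs_sub_comm B A
      rw [e1, e2] at this
      linarith [this]

end AuxAnalysis

section AuxENNReal
open Set ENNReal NNReal MeasureTheory

private lemma pm33_ennClarkson {p : ℝ} (hp : 1 < p) :
    ∃ C : ℝ≥0∞, 0 < C ∧ C ≠ ⊤ ∧ ∀ a b : ℝ≥0∞, a ≠ ⊤ → b ≠ ⊤ →
      ((a + b) / 2) ^ p + C * (((a - b) + (b - a)) ^ (2:ℝ) * (a + b) ^ (p - 2))
        ≤ (a ^ p + b ^ p) / 2 := by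
  obtain ⟨c, hc, hineq⟩ := pm33_realClarkson hp
  refine ⟨ENNReal.ofReal c, by simpa using hc, ENNReal.ofReal_ne_top, fun a b ha hb => ?_⟩
  by_cases hab : a + b = 0
  · rcases add_eq_zero.1 hab with ⟨rfl, rfl⟩
    simp [ENNReal.zero_rpow_of_pos (show (0:ℝ) < p by linarith),
      ENNReal.zero_rpow_of_pos (show (0:ℝ) < 2 by norm_num)]
  · set A := a.toReal with hA
    set B := b.toReal with hB
    have hA0 : 0 ≤ A := ENNReal.toReal_nonneg
    have hB0 : 0 ≤ B := ENNReal.toReal_nonneg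
    have haA : a = ENNReal.ofReal A := (ENNReal.ofReal_toReal ha).symm
    have hbB : b = ENNReal.ofReal B := (ENNReal.ofReal_toReal hb).symm
    have hABpos : 0 < A + B := by
      rcases (lt_or_eq_of_le (by positivity : (0:ℝ) ≤ A + B)) with h | h
      · exact h
      · exfalso; apply hab
        rw [haA, hbB, ← ENNReal.ofReal_add hA0 hB0, ← h, ENNReal.ofReal_zero]
    have hsum : a + b = ENNReal.ofReal (A + B) := by
      rw [haA, hbB, ENNReal.ofReal_add hA0 hB0]
    have hmid : (a + b) / 2 = ENNReal.ofReal ((A + B) / 2) := by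
      rw [hsum, ENNReal.ofReal_div_of_pos (by norm_num)]
      norm_num
    have hD : (a - b) + (b - a) = ENNReal.ofReal |A - B| := by
      rcases le_total A B with h | h
      · have hab' : a ≤ b := by rw [haA, hbB]; exact ENNReal.ofReal_le_ofReal h
        rw [tsub_eq_zero_of_le hab', zero_add, haA, hbB, ← ENNReal.ofReal_sub _ hA0,
          abs_of_nonpos (by linarith), neg_sub]
      · have hab' : b ≤ a := by rw [haA, hbB]; exact ENNReal.ofReal_le_ofReal h
        rw [tsub_eq_zero_of_le hab', add_zero, haA, hbB, ← ENNReal.ofReal_sub _ hB0,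
          abs_of_nonneg (by linarith)]
    rw [hmid, hD, hsum, haA, hbB,
      ENNReal.ofReal_rpow_of_pos (by linarith),
      ENNReal.ofReal_rpow_of_nonneg (abs_nonneg _) (by norm_num),
      ENNReal.ofReal_rpow_of_pos hABpos,
      ENNReal.ofReal_rpow_of_nonneg hA0 (by linarith),
      ENNReal.ofReal_rpow_of_nonneg hB0 (by linarith),
      ← ENNReal.ofReal_mul (by positivity), ← ENNReal.ofReal_mul (by positivity),
      ← ENNReal.ofReal_add (by positivity) (by positivity),
      ← ENNReal.ofReal_add (by positivity) (by positivity)]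
    have h2 : (ENNReal.ofReal (A ^ p + B ^ p)) / 2 = ENNReal.ofReal ((A ^ p + B ^ p) / 2) := by
      rw [ENNReal.ofReal_div_of_pos (by norm_num)]; norm_num
    rw [h2]
    apply ENNReal.ofReal_le_ofReal
    have := hineq A B hA0 hB0
    have habs2 : |A - B| ^ (2:ℝ) = |A - B| ^ (2:ℕ) := by
      rw [← Real.rpow_natCast |A - B| 2]; norm_num
    rw [habs2]
    linarith [this]

variable {α : Type*} [MeasurableSpace α] {μ : Measure α} {p : ℝ}

private lemma pm33_ptwise_ge2 (hp0 : 0 < p) (hp2 : 2 ≤ p) (a b : ℝ≥0∞) (hab : a ≤ b) :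
    a ^ p ≤ a ^ (2:ℝ) * b ^ (p - 2) := by
  rcases eq_or_ne a 0 with rfl | ha0
  · rw [ENNReal.zero_rpow_of_pos hp0, ENNReal.zero_rpow_of_pos (by norm_num), zero_mul]
  rcases eq_or_ne a ⊤ with rfl | hatop
  · have hb : b = ⊤ := top_le_iff.1 hab
    subst hb
    rw [ENNReal.top_rpow_of_pos hp0, ENNReal.top_rpow_of_pos (by norm_num)]
    rcases eq_or_lt_of_le hp2 with h | h
    · rw [← h]; norm_num
    · rw [ENNReal.top_rpow_of_pos (by linarith)]; simp
  · have : a ^ p = a ^ (2:ℝ) * a ^ (p - 2) := by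
      rw [← ENNReal.rpow_add _ _ ha0 hatop]; norm_num
    rw [this]
    exact mul_le_mul_right (ENNReal.rpow_le_rpow hab (by linarith)) _

private lemma pm33_intClarkson {C : ℝ≥0∞} (hC : C ≠ ⊤)
    (hpoint : ∀ a b : ℝ≥0∞, a ≠ ⊤ → b ≠ ⊤ →
      ((a + b) / 2) ^ p + C * (((a - b) + (b - a)) ^ (2:ℝ) * (a + b) ^ (p - 2))
        ≤ (a ^ p + b ^ p) / 2)
    {f g : α → ℝ≥0∞} (hf : Measurable f) (hg : Measurable g)
    (hffin : ∀ᵐ x ∂μ, f x ≠ ⊤) (hgfin : ∀ᵐ x ∂μ, g x ≠ ⊤) :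
    (∫⁻ x, ((f x + g x) / 2) ^ p ∂μ)
      + C * ∫⁻ x, ((f x - g x) + (g x - f x)) ^ (2:ℝ) * (f x + g x) ^ (p - 2) ∂μ
      ≤ ((∫⁻ x, f x ^ p ∂μ) + ∫⁻ x, g x ^ p ∂μ) / 2 := by
  have hm1 : Measurable fun x => ((f x + g x) / 2) ^ p :=
    (((hf.add hg).div_const 2).pow_const p)
  calc (∫⁻ x, ((f x + g x) / 2) ^ p ∂μ)
        + C * ∫⁻ x, ((f x - g x) + (g x - f x)) ^ (2:ℝ) * (f x + g x) ^ (p - 2) ∂μ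
      = ∫⁻ x, ((f x + g x) / 2) ^ p
          + C * (((f x - g x) + (g x - f x)) ^ (2:ℝ) * (f x + g x) ^ (p - 2)) ∂μ := by
        rw [lintegral_add_left hm1, lintegral_const_mul' _ _ hC]
    _ ≤ ∫⁻ x, (f x ^ p + g x ^ p) / 2 ∂μ := by
        apply lintegral_mono_ae
        filter_upwards [hffin, hgfin] with x h1 h2
        exact hpoint _ _ h1 h2
    _ = ((∫⁻ x, f x ^ p ∂μ) + ∫⁻ x, g x ^ p ∂μ) / 2 := by
        simp only [div_eq_mul_inv]
        rw [lintegral_mul_const' _ _ (by simp), lintegral_add_left (hf.pow_const p)]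

private lemma pm33_ptwise_lt2 (hp1 : 1 < p) (hp2 : p < 2) {a b : ℝ≥0∞} (hab : a ≤ b) (hb : b ≠ ⊤) :
    (a ^ (2:ℝ) * b ^ (p - 2)) ^ (p / 2) * (b ^ p) ^ ((2 - p) / 2) = a ^ p := by
  have hp0 : 0 < p := by linarith
  rcases eq_or_ne b 0 with rfl | hb0
  · have ha0 : a = 0 := le_zero_iff.1 hab
    subst ha0
    rw [ENNReal.zero_rpow_of_pos (by norm_num : (0:ℝ) < 2),
      ENNReal.zero_rpow_of_neg (by linarith : p - 2 < 0), zero_mul,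
      ENNReal.zero_rpow_of_pos (by positivity : (0:ℝ) < p / 2),
      ENNReal.zero_rpow_of_pos hp0, zero_mul]
  · rw [ENNReal.mul_rpow_of_nonneg _ _ (by positivity : (0:ℝ) ≤ p / 2),
      ← ENNReal.rpow_mul a, ← ENNReal.rpow_mul b, ← ENNReal.rpow_mul b,
      mul_assoc, ← ENNReal.rpow_add _ _ hb0 hb]
    have e1 : (2:ℝ) * (p / 2) = p := by ring
    have e2 : (p - 2) * (p / 2) + p * ((2 - p) / 2) = 0 := by ring
    rw [e1, e2, ENNReal.rpow_zero, mul_one]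

private lemma pm33_holder_lt2 (hp1 : 1 < p) (hp2 : p < 2) {D w : α → ℝ≥0∞}
    (hD : Measurable D) (hw : Measurable w)
    (hDw : ∀ᵐ x ∂μ, D x ≤ w x) (hwfin : ∀ᵐ x ∂μ, w x ≠ ⊤) :
    ∫⁻ x, D x ^ p ∂μ ≤
      (∫⁻ x, D x ^ (2:ℝ) * w x ^ (p - 2) ∂μ) ^ (p / 2) * (∫⁻ x, w x ^ p ∂μ) ^ ((2 - p) / 2) := by
  have hp0 : 0 < p := by linarith
  have hpq : (2 / p).HolderConjugate (2 / (2 - p)) := by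
    rw [Real.holderConjugate_iff]
    constructor
    · rw [lt_div_iff₀ hp0]; linarith
    · rw [inv_div, inv_div]
      field_simp
      ring
  set F : α → ℝ≥0∞ := fun x => (D x ^ (2:ℝ) * w x ^ (p - 2)) ^ (p / 2) with hF
  set G : α → ℝ≥0∞ := fun x => (w x ^ p) ^ ((2 - p) / 2) with hG
  have hFm : Measurable F := ((hD.pow_const _).mul (hw.pow_const _)).pow_const _
  have hGm : Measurable G := (hw.pow_const _).pow_const _
  have h := ENNReal.lintegral_mul_le_Lp_mul_Lq μ hpq hFm.aemeasurable hGm.aemeasurable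
  have hfg : ∫⁻ x, (F * G) x ∂μ = ∫⁻ x, D x ^ p ∂μ := by
    apply lintegral_congr_ae
    filter_upwards [hDw, hwfin] with x h1 h2
    exact pm33_ptwise_lt2 hp1 hp2 h1 h2
  have hFe : ∀ x, F x ^ (2 / p) = D x ^ (2:ℝ) * w x ^ (p - 2) := by
    intro x
    rw [hF, ← ENNReal.rpow_mul]
    have : p / 2 * (2 / p) = 1 := by field_simp
    rw [this, ENNReal.rpow_one]
  have hGe : ∀ x, G x ^ (2 / (2 - p)) = w x ^ p := by
    intro x
    rw [hG, ← ENNReal.rpow_mul]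
    have : (2 - p) / 2 * (2 / (2 - p)) = 1 := by
      have h2p : (2:ℝ) - p ≠ 0 := by nlinarith
      field_simp
    rw [this, ENNReal.rpow_one]
  have e1 : 1 / (2 / p) = p / 2 := by rw [one_div_div]
  have e2 : 1 / (2 / (2 - p)) = (2 - p) / 2 := by rw [one_div_div]
  rw [hfg] at h
  simp only [hFe, hGe, e1, e2] at h
  exact h

private lemma pm33_finMinkowski (hp1 : 1 ≤ p) (h : ℕ → α → ℝ≥0∞)
    (hm : ∀ i, Measurable (h i)) (n : ℕ) :
    (∫⁻ x, (∑ i ∈ Finset.range n, h i x) ^ p ∂μ) ^ (1 / p)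
      ≤ ∑ i ∈ Finset.range n, (∫⁻ x, h i x ^ p ∂μ) ^ (1 / p) := by
  have hp0 : 0 < p := lt_of_lt_of_le zero_lt_one hp1
  induction n with
  | zero =>
      simp only [Finset.range_zero, Finset.sum_empty]
      rw [ENNReal.zero_rpow_of_pos hp0, lintegral_zero, ENNReal.zero_rpow_of_pos (by positivity)]
  | succ n ih =>
      have key : (∫⁻ x, ((fun x => ∑ i ∈ Finset.range n, h i x) + h n) x ^ p ∂μ) ^ (1 / p)
          ≤ (∫⁻ x, (∑ i ∈ Finset.range n, h i x) ^ p ∂μ) ^ (1 / p)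
            + (∫⁻ x, h n x ^ p ∂μ) ^ (1 / p) :=
        ENNReal.lintegral_Lp_add_le
          (Finset.measurable_sum _ (fun i _ => hm i)).aemeasurable (hm n).aemeasurable hp1
      simp only [Pi.add_apply] at key
      calc (∫⁻ x, (∑ i ∈ Finset.range (n+1), h i x) ^ p ∂μ) ^ (1 / p)
          = (∫⁻ x, ((∑ i ∈ Finset.range n, h i x) + h n x) ^ p ∂μ) ^ (1 / p) := by
            simp only [Finset.sum_range_succ]
        _ ≤ _ := key
        _ ≤ ∑ i ∈ Finset.range (n+1), (∫⁻ x, h i x ^ p ∂μ) ^ (1 / p) := by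
            rw [Finset.sum_range_succ]
            exact add_le_add_left ih _

private lemma pm33_tsumMinkowski (hp1 : 1 ≤ p) (h : ℕ → α → ℝ≥0∞) (hm : ∀ i, Measurable (h i)) :
    (∫⁻ x, (∑' i, h i x) ^ p ∂μ) ^ (1 / p) ≤ ∑' i, (∫⁻ x, h i x ^ p ∂μ) ^ (1 / p) := by
  have hp0 : 0 < p := lt_of_lt_of_le zero_lt_one hp1
  have e1 : ∀ x, (∑' i, h i x) ^ p = ⨆ n, (∑ i ∈ Finset.range n, h i x) ^ p := by
    intro x
    rw [ENNReal.tsum_eq_iSup_nat]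
    have := (ENNReal.orderIsoRpow p hp0).map_iSup (fun n => ∑ i ∈ Finset.range n, h i x)
    simp only [ENNReal.orderIsoRpow_apply] at this
    exact this
  have e2 : ∫⁻ x, (∑' i, h i x) ^ p ∂μ
      = ⨆ n, ∫⁻ x, (∑ i ∈ Finset.range n, h i x) ^ p ∂μ := by
    simp only [e1]
    apply lintegral_iSup
    · exact fun n => (Finset.measurable_sum _ (fun i _ => hm i)).pow_const p
    · intro a b hab x
      exact ENNReal.rpow_le_rpow
        (Finset.sum_le_sum_of_subset (Finset.range_subset_range.2 hab)) hp0.le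
  rw [e2]
  have hb : ∀ n, (∫⁻ x, (∑ i ∈ Finset.range n, h i x) ^ p ∂μ)
      ≤ (∑' i, (∫⁻ x, h i x ^ p ∂μ) ^ (1 / p)) ^ p := by
    intro n
    have h1 := pm33_finMinkowski (μ := μ) hp1 h hm n
    have h2 : (∑ i ∈ Finset.range n, (∫⁻ x, h i x ^ p ∂μ) ^ (1 / p))
        ≤ ∑' i, (∫⁻ x, h i x ^ p ∂μ) ^ (1 / p) := ENNReal.sum_le_tsum _
    have h3 := ENNReal.rpow_le_rpow (h1.trans h2) hp0.le
    rwa [← ENNReal.rpow_mul, one_div_mul_cancel hp0.ne', ENNReal.rpow_one] at h3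
  have h4 := iSup_le hb
  have h5 := ENNReal.rpow_le_rpow h4 (by positivity : (0:ℝ) ≤ 1/p)
  rwa [← ENNReal.rpow_mul, mul_one_div, div_self hp0.ne', ENNReal.rpow_one] at h5

end AuxENNReal

section AuxCurve
open Set ENNReal NNReal MeasureTheory

variable {X : Type*} [MetricSpace X] [MeasurableSpace X] [BorelSpace X]

private lemma pm33_curveIntegral_mono {ρ₁ ρ₂ : X → ℝ≥0∞} (h : ∀ x, ρ₁ x ≤ ρ₂ x) (γ : Curve X) :
    arcCurveIntegral ρ₁ γ ≤ arcCurveIntegral ρ₂ γ :=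
  lintegral_mono fun _ => h _

private lemma pm33_curve_comp_aemeasurable {ρ : X → ℝ≥0∞} (hρ : Measurable ρ) (γ : Curve X) :
    AEMeasurable (fun s => ρ (γ.toFun s)) (volume.restrict (Set.Icc 0 γ.len)) :=
  hρ.comp_aemeasurable ((γ.lipschitz.continuousOn).aemeasurable measurableSet_Icc)

private lemma pm33_curveIntegral_half_add {f g : X → ℝ≥0∞} (hf : Measurable f)
    (γ : Curve X) :
    arcCurveIntegral (fun x => (f x + g x) / 2) γ
      = (arcCurveIntegral f γ + arcCurveIntegral g γ) / 2 := by
  unfold arcCurveIntegral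
  simp only [div_eq_mul_inv]
  rw [lintegral_mul_const' _ _ (by simp : (2:ℝ≥0∞)⁻¹ ≠ ⊤),
    lintegral_add_left' (pm33_curve_comp_aemeasurable hf γ)]

private lemma pm33_adm_half_add {f g : X → ℝ≥0∞} (hf : Measurable f)
    {γ : Curve X} (h1 : 1 ≤ arcCurveIntegral f γ) (h2 : 1 ≤ arcCurveIntegral g γ) :
    1 ≤ arcCurveIntegral (fun x => (f x + g x) / 2) γ := by
  rw [pm33_curveIntegral_half_add hf]
  calc (1:ℝ≥0∞) = (1 + 1) / 2 := by
        rw [one_add_one_eq_two, ENNReal.div_self (by norm_num) (by norm_num)]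
    _ ≤ _ := ENNReal.div_le_div_right (add_le_add h1 h2) 2

variable {p : ℝ} {μ : MeasureTheory.Measure X}

private lemma pm33_pModulus_le {Γ : Set (Curve X)} {ρ : X → ℝ≥0∞} (hm : Measurable ρ)
    (had : ∀ γ ∈ Γ, 1 ≤ arcCurveIntegral ρ γ) :
    pModulus p μ Γ ≤ ∫⁻ x, ρ x ^ p ∂μ := by
  refine iInf_le_of_le ρ (iInf_le_of_le hm ?_)
  exact iInf_le _ had

private lemma pm33_pModulus_mono {Γ₁ Γ₂ : Set (Curve X)} (h : Γ₁ ⊆ Γ₂) :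
    pModulus p μ Γ₁ ≤ pModulus p μ Γ₂ := by
  refine le_iInf fun ρ => le_iInf fun hm => le_iInf fun had => ?_
  exact pm33_pModulus_le hm (fun γ hγ => had γ (h hγ))

private lemma pm33_pModulus_exists {Γ : Set (Curve X)} (hfin : pModulus p μ Γ ≠ ⊤)
    {δ : ℝ≥0∞} (hδ : δ ≠ 0) :
    ∃ ρ : X → ℝ≥0∞, Measurable ρ ∧ (∀ γ ∈ Γ, 1 ≤ arcCurveIntegral ρ γ) ∧
      ∫⁻ x, ρ x ^ p ∂μ ≤ pModulus p μ Γ + δ := by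
  have h : pModulus p μ Γ < pModulus p μ Γ + δ := ENNReal.lt_add_right hfin hδ
  conv_lhs at h => rw [pModulus]
  simp only [iInf_lt_iff] at h
  obtain ⟨ρ, h1, h2, h3⟩ := h
  exact ⟨ρ, h1, h2, h3.le⟩

end AuxCurve

/-- Lemma 3.3: continuity from below for the `p`-modulus. -/
theorem pModulus_tendsto_of_monotone
    {X : Type*} [MetricSpace X] [MeasurableSpace X] [BorelSpace X]
    (μ : Measure X) (hμball : ∀ (x : X) (r : ℝ), μ (Metric.ball x r) < ⊤)
    (p : ℝ) (hp : 1 < p)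
    (Γ : ℕ → Set (Curve X)) (hmono : ∀ j, Γ j ⊆ Γ (j + 1)) :
    Filter.Tendsto (fun j => pModulus p μ (Γ j)) Filter.atTop
      (nhds (pModulus p μ (⋃ j, Γ j))) := by
  classical
  have hp0 : (0:ℝ) < p := lt_trans zero_lt_one hp
  set β : ℕ → ℝ≥0∞ := fun j => pModulus p μ (Γ j) with hβdef
  have hΓmono : Monotone Γ := monotone_nat_of_le_succ hmono
  have hβmono : Monotone β := fun i j hij => pm33_pModulus_mono (hΓmono hij)
  have hmain : pModulus p μ (⋃ j, Γ j) = ⨆ j, β j := by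
    refine le_antisymm ?_ (iSup_le fun j => pm33_pModulus_mono (subset_iUnion Γ j))
    set S : ℝ≥0∞ := ⨆ j, β j with hSdef
    rcases eq_or_ne S ⊤ with htop | hfin
    · rw [htop]; exact le_top
    have hβle : ∀ j, β j ≤ S := fun j => le_iSup β j
    have hβfin : ∀ j, β j ≠ ⊤ := fun j => ne_top_of_le_ne_top hfin (hβle j)
    obtain ⟨C, hC0, hCtop, hCineq⟩ := pm33_ennClarkson hp
    have key : ∀ ε : ℝ≥0∞, ε ≠ 0 → ε ≤ 1 → ε ≠ ⊤ →
        (pModulus p μ (⋃ j, Γ j)) ^ (1/p) ≤ S ^ (1/p) + 2 * ε := by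
      intro ε hε0 hε1 hεtop
      -- geometric weights
      set τ : ℕ → ℝ≥0∞ := fun i => ε * 2⁻¹ ^ (i+1) with hτdef
      have hhalf0 : (2:ℝ≥0∞)⁻¹ ≠ 0 := ENNReal.inv_ne_zero.2 (by norm_num)
      have hhalftop : (2:ℝ≥0∞)⁻¹ ≠ ⊤ := ENNReal.inv_ne_top.2 (by norm_num)
      have hτ0 : ∀ i, τ i ≠ 0 := fun i => mul_ne_zero hε0 (pow_ne_zero _ hhalf0)
      have hτtop : ∀ i, τ i ≠ ⊤ := fun i =>
        ENNReal.mul_ne_top hεtop (ENNReal.pow_ne_top hhalftop)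
      have hτanti : ∀ i, τ (i+1) ≤ τ i := fun i =>
        mul_le_mul_right (pow_le_pow_right_of_le_one' (ENNReal.inv_le_one.2 (by norm_num)) (by omega)) ε
      have hτsum : ∑' i, τ i ≤ ε := by
        have hg : ∑' i : ℕ, ((2:ℝ≥0∞)⁻¹) ^ (i+1) = 2⁻¹ * ∑' i : ℕ, ((2:ℝ≥0∞)⁻¹) ^ i := by
          rw [← ENNReal.tsum_mul_left]
          exact tsum_congr fun i => (pow_succ' _ _)
        have hgeo : ∑' i : ℕ, ((2:ℝ≥0∞)⁻¹) ^ i = 2 := by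
          rw [ENNReal.tsum_geometric]
          have h1 : (1:ℝ≥0∞) - 2⁻¹ = 2⁻¹ := by
            rw [ENNReal.sub_eq_of_eq_add hhalftop ENNReal.inv_two_add_inv_two.symm]
          rw [h1, inv_inv]
        have heq : ∑' i, τ i = ε := by
          calc ∑' i, τ i = ε * ∑' i : ℕ, ((2:ℝ≥0∞)⁻¹) ^ (i+1) := ENNReal.tsum_mul_left
            _ = ε * (2⁻¹ * 2) := by rw [hg, hgeo]
            _ = ε := by
                rw [ENNReal.inv_mul_cancel (by norm_num) (by norm_num), mul_one]
        exact heq.le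
      set T : ℕ → ℝ≥0∞ := fun i => τ i ^ p with hTdef
      have hT0 : ∀ i, T i ≠ 0 := fun i => by
        simp only [hTdef, ne_eq, ENNReal.rpow_eq_zero_iff, not_or]
        exact ⟨fun h => hτ0 i h.1, fun h => hτtop i h.1⟩
      have hTtop : ∀ i, T i ≠ ⊤ := fun i => by
        simp only [hTdef, ne_eq, ENNReal.rpow_eq_top_iff, not_or]
        exact ⟨fun h => hτ0 i h.1, fun h => hτtop i h.1⟩
      -- the constant for the p < 2 Hölder branch
      set W : ℝ≥0∞ := 2 ^ (p+1) * (S+1) with hWdef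
      have h2top : ((2:ℝ≥0∞) ^ (p+1)) ≠ ⊤ := by
        simp [ENNReal.rpow_eq_top_iff]
      have hW0 : W ≠ 0 := mul_ne_zero (by simp [ENNReal.rpow_eq_zero_iff]) (by simp)
      have hWtop : W ≠ ⊤ := ENNReal.mul_ne_top h2top (by simp [hfin])
      set K' : ℝ≥0∞ := W ^ ((2-p)/2) with hKdef
      have hK0 : K' ≠ 0 := by
        simp only [hKdef, ne_eq, ENNReal.rpow_eq_zero_iff, not_or]
        exact ⟨fun h => hW0 h.1, fun h => hWtop h.1⟩
      have hKtop : K' ≠ ⊤ := by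
        simp only [hKdef, ne_eq, ENNReal.rpow_eq_top_iff, not_or]
        exact ⟨fun h => hW0 h.1, fun h => hWtop h.1⟩
      -- the tolerances
      set f : ℕ → ℝ≥0∞ := fun i =>
        min (min 1 (ε^p)) (min (C * T i / 2) (C * ((T i / K') ^ (2/p)) / 2)) with hfdef
      have hf0 : ∀ i, f i ≠ 0 := by
        intro i
        have h1 : (0:ℝ≥0∞) < min 1 (ε^p) := lt_min one_pos
          (by simp only [ENNReal.rpow_eq_zero_iff, pos_iff_ne_zero, ne_eq, not_or]
              exact ⟨fun h => hε0 h.1, fun h => hεtop h.1⟩)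
        have h2 : (0:ℝ≥0∞) < C * T i / 2 :=
          ENNReal.div_pos (mul_ne_zero hC0.ne' (hT0 i)) (by norm_num)
        have h3 : (0:ℝ≥0∞) < C * ((T i / K') ^ (2/p)) / 2 := by
          refine ENNReal.div_pos (mul_ne_zero hC0.ne' ?_) (by norm_num)
          simp only [ENNReal.rpow_eq_zero_iff, ne_eq, not_or]
          constructor
          · rintro ⟨h, -⟩
            exact (ENNReal.div_pos (hT0 i) hKtop).ne' h
          · rintro ⟨-, h⟩
            linarith [div_pos (by norm_num : (0:ℝ) < 2) hp0]
        exact (lt_min h1 (lt_min h2 h3)).ne'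
      have hfle1 : ∀ i, f i ≤ 1 := fun i => (min_le_left _ _).trans (min_le_left _ _)
      have hfleεp : ∀ i, f i ≤ ε ^ p := fun i => (min_le_left _ _).trans (min_le_right _ _)
      have hfleA : ∀ i, f i ≤ C * T i / 2 := fun i => (min_le_right _ _).trans (min_le_left _ _)
      have hfleB : ∀ i, f i ≤ C * ((T i / K') ^ (2/p)) / 2 := fun i =>
        (min_le_right _ _).trans (min_le_right _ _)
      set δ : ℕ → ℝ≥0∞ := fun i => Nat.rec (f 0) (fun n ih => min ih (f (n+1))) i with hδdef
      have hδsucc : ∀ i, δ (i+1) = min (δ i) (f (i+1)) := fun i => rfl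
      have hδle : ∀ i, δ i ≤ f i := by
        intro i; cases i with
        | zero => exact le_rfl
        | succ n => exact min_le_right _ _
      have hδanti : ∀ i, δ (i+1) ≤ δ i := fun i => min_le_left _ _
      have hδ0 : ∀ i, δ i ≠ 0 := by
        intro i; induction i with
        | zero => exact hf0 0
        | succ n ih =>
            rw [hδsucc]
            exact (lt_min (pos_iff_ne_zero.2 ih) (pos_iff_ne_zero.2 (hf0 (n+1)))).ne'
      have hδ1 : ∀ i, δ i ≤ 1 := fun i => (hδle i).trans (hfle1 i)
      -- index selection
      have hidx : ∀ d : ℝ≥0∞, d ≠ 0 → ∀ n₀ : ℕ, ∃ k, n₀ < k ∧ S ≤ β k + d := by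
        intro d hd n₀
        rcases le_or_gt S d with hSd | hdS
        · exact ⟨n₀+1, Nat.lt_succ_self _, hSd.trans le_add_self⟩
        · have hS0 : S ≠ 0 := fun h => by simp [h] at hdS
          have h1 : S - d < S := ENNReal.sub_lt_self hfin hS0 hd
          rw [hSdef, lt_iSup_iff] at h1
          obtain ⟨m₁, hm₁⟩ := h1
          refine ⟨max m₁ (n₀+1), lt_of_lt_of_le (Nat.lt_succ_self _) (le_max_right _ _), ?_⟩
          have h2 : S - d ≤ β (max m₁ (n₀+1)) := hm₁.le.trans (hβmono (le_max_left _ _))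
          exact tsub_le_iff_right.1 h2
      have hsel : ∀ i n₀, ∃ k, n₀ < k ∧ S ≤ β k + δ i := fun i n₀ => hidx (δ i) (hδ0 i) n₀
      choose Msel hM1 hM2 using hsel
      set m : ℕ → ℕ := fun i => Nat.rec (Msel 0 0) (fun n ih => Msel (n+1) ih) i with hmdef
      have hmlt : ∀ i, m i < m (i+1) := fun i => hM1 (i+1) (m i)
      have hmmono : StrictMono m := strictMono_nat_of_lt_succ hmlt
      have hmS : ∀ i, S ≤ β (m i) + δ i := by
        intro i; cases i with
        | zero => exact hM2 0 0
        | succ n => exact hM2 (n+1) (m n)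
      -- near minimizers
      have hex : ∀ i, ∃ ρ : X → ℝ≥0∞, Measurable ρ ∧ (∀ γ ∈ Γ (m i), 1 ≤ arcCurveIntegral ρ γ) ∧
          ∫⁻ x, ρ x ^ p ∂μ ≤ β (m i) + δ i :=
        fun i => pm33_pModulus_exists (hβfin (m i)) (hδ0 i)
      choose g hgm hgadm hgE using hex
      have hgES : ∀ i, ∫⁻ x, g i x ^ p ∂μ ≤ S + δ i :=
        fun i => (hgE i).trans (add_le_add_left (hβle _) _)
      have hgES1 : ∀ i, ∫⁻ x, g i x ^ p ∂μ ≤ S + 1 :=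
        fun i => (hgES i).trans (add_le_add_right (hδ1 i) _)
      have hEfin : ∀ i, ∫⁻ x, g i x ^ p ∂μ ≠ ⊤ :=
        fun i => ne_top_of_le_ne_top (by simp [hfin]) (hgES1 i)
      have hfinae : ∀ᵐ x ∂μ, ∀ i, g i x ≠ ⊤ := by
        rw [MeasureTheory.ae_all_iff]
        intro i
        filter_upwards [MeasureTheory.ae_lt_top ((hgm i).pow_const p) (hEfin i)] with x hx
        intro hgx
        rw [hgx, ENNReal.top_rpow_of_pos hp0] at hx
        exact (lt_irrefl _ hx).elim
      have hfinae1 : ∀ i, ∀ᵐ x ∂μ, g i x ≠ ⊤ := by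
        intro i; filter_upwards [hfinae] with x hx using hx i
      -- difference functions
      set D : ℕ → X → ℝ≥0∞ :=
        fun i x => (g i x - g (i+1) x) + (g (i+1) x - g i x) with hDdef
      set w : ℕ → X → ℝ≥0∞ := fun i x => g i x + g (i+1) x with hwdef
      have hDm : ∀ i, Measurable (D i) :=
        fun i => ((hgm i).sub (hgm (i+1))).add ((hgm (i+1)).sub (hgm i))
      have hwm : ∀ i, Measurable (w i) := fun i => (hgm i).add (hgm (i+1))
      have hDw : ∀ i x, D i x ≤ w i x := fun i x => add_le_add tsub_le_self tsub_le_self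
      have hwfin : ∀ i, ∀ᵐ x ∂μ, w i x ≠ ⊤ := by
        intro i
        filter_upwards [hfinae] with x hx
        exact ENNReal.add_ne_top.2 ⟨hx i, hx (i+1)⟩
      -- Clarkson estimate
      have hI : ∀ i, C * (∫⁻ x, D i x ^ (2:ℝ) * w i x ^ (p-2) ∂μ) ≤ 2 * δ i := by
        intro i
        have hmidadm : ∀ γ ∈ Γ (m i), 1 ≤ arcCurveIntegral (fun x => (g i x + g (i+1) x)/2) γ := by
          intro γ hγ
          exact pm33_adm_half_add (hgm i) (hgadm i γ hγ)
            (hgadm (i+1) γ (hΓmono (hmlt i).le hγ))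
        have hmidE : β (m i) ≤ ∫⁻ x, ((g i x + g (i+1) x)/2) ^ p ∂μ :=
          pm33_pModulus_le (((hgm i).add (hgm (i+1))).div_const 2) hmidadm
        have hclark := pm33_intClarkson (μ := μ) hCtop hCineq (hgm i) (hgm (i+1))
          (hfinae1 i) (hfinae1 (i+1))
        have hsum : (∫⁻ x, g i x ^ p ∂μ) + (∫⁻ x, g (i+1) x ^ p ∂μ) ≤ 2 * (S + δ i) := by
          calc (∫⁻ x, g i x ^ p ∂μ) + (∫⁻ x, g (i+1) x ^ p ∂μ)
              ≤ (S + δ i) + (S + δ (i+1)) := add_le_add (hgES i) (hgES (i+1))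
            _ ≤ (S + δ i) + (S + δ i) := add_le_add_right (add_le_add_right (hδanti i) _) _
            _ = 2 * (S + δ i) := (two_mul _).symm
        have h2 : β (m i) + C * (∫⁻ x, D i x ^ (2:ℝ) * w i x ^ (p-2) ∂μ) ≤ S + δ i := by
          calc β (m i) + C * (∫⁻ x, D i x ^ (2:ℝ) * w i x ^ (p-2) ∂μ)
              ≤ (∫⁻ x, ((g i x + g (i+1) x)/2) ^ p ∂μ)
                + C * (∫⁻ x, D i x ^ (2:ℝ) * w i x ^ (p-2) ∂μ) := add_le_add_left hmidE _
            _ ≤ ((∫⁻ x, g i x ^ p ∂μ) + (∫⁻ x, g (i+1) x ^ p ∂μ)) / 2 := hclark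
            _ ≤ (2 * (S + δ i)) / 2 := ENNReal.div_le_div_right hsum 2
            _ = S + δ i := by
                rw [mul_comm, mul_div_assoc, ENNReal.div_self (by norm_num) (by norm_num),
                  mul_one]
        have h3 : β (m i) + C * (∫⁻ x, D i x ^ (2:ℝ) * w i x ^ (p-2) ∂μ)
            ≤ β (m i) + 2 * δ i := by
          refine h2.trans ?_
          calc S + δ i ≤ (β (m i) + δ i) + δ i := add_le_add_left (hmS i) _
            _ = β (m i) + 2 * δ i := by rw [add_assoc, two_mul]
        exact (ENNReal.add_le_add_iff_left (hβfin (m i))).1 h3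
      -- bound on the p-energy of differences
      have hDp : ∀ i, ∫⁻ x, D i x ^ p ∂μ ≤ T i := by
        intro i
        have hIle : (∫⁻ x, D i x ^ (2:ℝ) * w i x ^ (p-2) ∂μ) ≤ 2 * δ i / C := by
          rw [ENNReal.le_div_iff_mul_le (Or.inl hC0.ne') (Or.inl hCtop), mul_comm]
          exact hI i
        rcases le_or_gt 2 p with h2p | h2p
        · -- p ≥ 2
          have hpt : ∫⁻ x, D i x ^ p ∂μ ≤ ∫⁻ x, D i x ^ (2:ℝ) * w i x ^ (p-2) ∂μ :=
            MeasureTheory.lintegral_mono fun x => pm33_ptwise_ge2 hp0 h2p _ _ (hDw i x)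
          have hδb : 2 * δ i / C ≤ T i := by
            rw [ENNReal.div_le_iff_le_mul (Or.inl hC0.ne') (Or.inl hCtop)]
            calc 2 * δ i ≤ 2 * (C * T i / 2) := mul_le_mul_right ((hδle i).trans (hfleA i)) 2
              _ = C * T i := ENNReal.mul_div_cancel' (by norm_num) (by norm_num)
              _ = T i * C := mul_comm _ _
          exact hpt.trans (hIle.trans hδb)
        · -- p < 2
          have hh := pm33_holder_lt2 (μ := μ) hp h2p (hDm i) (hwm i)
            (Filter.Eventually.of_forall (hDw i)) (hwfin i)
          have hwp : ∫⁻ x, w i x ^ p ∂μ ≤ W := by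
            have hpt : ∀ x, w i x ^ p ≤ 2 ^ p * (g i x ^ p + g (i+1) x ^ p) := by
              intro x
              have h1 : w i x ≤ 2 * max (g i x) (g (i+1) x) := by
                rw [two_mul]
                exact add_le_add (le_max_left _ _) (le_max_right _ _)
              calc w i x ^ p ≤ (2 * max (g i x) (g (i+1) x)) ^ p :=
                    ENNReal.rpow_le_rpow h1 hp0.le
                _ = 2 ^ p * (max (g i x) (g (i+1) x)) ^ p :=
                    ENNReal.mul_rpow_of_nonneg _ _ hp0.le
                _ ≤ 2 ^ p * (g i x ^ p + g (i+1) x ^ p) := by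
                    refine mul_le_mul_right ?_ _
                    rcases max_cases (g i x) (g (i+1) x) with ⟨h, -⟩ | ⟨h, -⟩ <;> rw [h]
                    · exact le_add_right le_rfl
                    · exact le_add_left le_rfl
            calc ∫⁻ x, w i x ^ p ∂μ ≤ ∫⁻ x, 2 ^ p * (g i x ^ p + g (i+1) x ^ p) ∂μ :=
                  MeasureTheory.lintegral_mono hpt
              _ = 2 ^ p * ((∫⁻ x, g i x ^ p ∂μ) + ∫⁻ x, g (i+1) x ^ p ∂μ) := by
                  rw [MeasureTheory.lintegral_const_mul' _ _ (by simp [ENNReal.rpow_eq_top_iff]),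
                    MeasureTheory.lintegral_add_left ((hgm i).pow_const p)]
              _ ≤ 2 ^ p * ((S + 1) + (S + 1)) :=
                  mul_le_mul_right (add_le_add (hgES1 i) (hgES1 (i+1))) _
              _ = W := by
                  rw [hWdef, ← two_mul, ENNReal.rpow_add _ _ (by norm_num) (by norm_num),
                    ENNReal.rpow_one, mul_assoc, mul_comm (2:ℝ≥0∞) (S+1), ← mul_assoc]
          have hKle : (∫⁻ x, w i x ^ p ∂μ) ^ ((2-p)/2) ≤ K' :=
            ENNReal.rpow_le_rpow hwp (by linarith)
          have hIb : (∫⁻ x, D i x ^ (2:ℝ) * w i x ^ (p-2) ∂μ) ≤ (T i / K') ^ (2/p) := by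
            refine hIle.trans ?_
            rw [ENNReal.div_le_iff_le_mul (Or.inl hC0.ne') (Or.inl hCtop)]
            calc 2 * δ i ≤ 2 * (C * ((T i / K') ^ (2/p)) / 2) :=
                  mul_le_mul_right ((hδle i).trans (hfleB i)) 2
              _ = C * ((T i / K') ^ (2/p)) := ENNReal.mul_div_cancel' (by norm_num) (by norm_num)
              _ = (T i / K') ^ (2/p) * C := mul_comm _ _
          have hIp : (∫⁻ x, D i x ^ (2:ℝ) * w i x ^ (p-2) ∂μ) ^ (p/2) ≤ T i / K' := by
            have h4 := ENNReal.rpow_le_rpow hIb (by positivity : (0:ℝ) ≤ p/2)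
            rwa [← ENNReal.rpow_mul,
              (by field_simp : (2/p) * (p/2) = 1), ENNReal.rpow_one] at h4
          calc ∫⁻ x, D i x ^ p ∂μ
              ≤ (∫⁻ x, D i x ^ (2:ℝ) * w i x ^ (p-2) ∂μ) ^ (p/2)
                * (∫⁻ x, w i x ^ p ∂μ) ^ ((2-p)/2) := hh
            _ ≤ (T i / K') * K' := mul_le_mul' hIp hKle
            _ = T i := ENNReal.div_mul_cancel hK0 hKtop
      -- increments
      set d : ℕ → X → ℝ≥0∞ := fun i x => g (i+1) x - g i x with hddef
      have hdm : ∀ i, Measurable (d i) := fun i => (hgm (i+1)).sub (hgm i)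
      have hdp : ∀ i, (∫⁻ x, d i x ^ p ∂μ) ^ (1/p) ≤ τ i := by
        intro i
        have h1 : ∫⁻ x, d i x ^ p ∂μ ≤ T i :=
          (MeasureTheory.lintegral_mono fun x =>
            ENNReal.rpow_le_rpow (le_add_self : d i x ≤ D i x) hp0.le).trans (hDp i)
        have h2 := ENNReal.rpow_le_rpow h1 (by positivity : (0:ℝ) ≤ 1/p)
        rwa [hTdef, ← ENNReal.rpow_mul, mul_one_div, div_self hp0.ne',
          ENNReal.rpow_one] at h2
      -- the admissible majorant
      set σ : X → ℝ≥0∞ := fun x => g 0 x + ∑' i, d i x with hσdef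
      have hσm : Measurable σ := (hgm 0).add (Measurable.ennreal_tsum hdm)
      have hgleσ : ∀ j x, g j x ≤ σ x := by
        intro j x
        have hpart : ∀ k : ℕ, g k x ≤ g 0 x + ∑ i ∈ Finset.range k, d i x := by
          intro k; induction k with
          | zero => simp
          | succ n ih =>
              calc g (n+1) x ≤ g n x + d n x := le_add_tsub
                _ ≤ (g 0 x + ∑ i ∈ Finset.range n, d i x) + d n x := add_le_add_left ih _
                _ = g 0 x + ∑ i ∈ Finset.range (n+1), d i x := by
                    rw [Finset.sum_range_succ, add_assoc]
        exact (hpart j).trans (add_le_add_right (ENNReal.sum_le_tsum _) _)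
      have hσadm : ∀ γ ∈ ⋃ j, Γ j, 1 ≤ arcCurveIntegral σ γ := by
        intro γ hγ
        obtain ⟨j, hj⟩ := mem_iUnion.1 hγ
        have h1 : 1 ≤ arcCurveIntegral (g j) γ := hgadm j γ (hΓmono hmmono.le_apply hj)
        exact h1.trans (pm33_curveIntegral_mono (fun x => hgleσ j x) γ)
      have hModle : pModulus p μ (⋃ j, Γ j) ≤ ∫⁻ x, σ x ^ p ∂μ := pm33_pModulus_le hσm hσadm
      -- energy bound
      have hmink : (∫⁻ x, σ x ^ p ∂μ) ^ (1/p)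
          ≤ (∫⁻ x, g 0 x ^ p ∂μ) ^ (1/p) + (∫⁻ x, (∑' i, d i x) ^ p ∂μ) ^ (1/p) := by
        have h1 := ENNReal.lintegral_Lp_add_le (μ := μ) (hgm 0).aemeasurable
          (Measurable.ennreal_tsum hdm).aemeasurable hp.le
        simpa only [Pi.add_apply] using h1
      have htsum_le : (∫⁻ x, (∑' i, d i x) ^ p ∂μ) ^ (1/p) ≤ ε :=
        ((pm33_tsumMinkowski (μ := μ) hp.le d hdm).trans (ENNReal.tsum_le_tsum hdp)).trans hτsum
      have hg0 : (∫⁻ x, g 0 x ^ p ∂μ) ^ (1/p) ≤ S ^ (1/p) + ε := by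
        have h1 : ∫⁻ x, g 0 x ^ p ∂μ ≤ S + ε ^ p :=
          (hgES 0).trans (add_le_add_right ((hδle 0).trans (hfleεp 0)) S)
        have h2 := ENNReal.rpow_le_rpow h1 (by positivity : (0:ℝ) ≤ 1/p)
        have h3 := ENNReal.rpow_add_le_add_rpow S (ε ^ p) (by positivity : (0:ℝ) ≤ 1/p)
          (by rw [div_le_one hp0]; exact hp.le)
        have h4 : (ε ^ p) ^ (1/p) = ε := by
          rw [← ENNReal.rpow_mul, mul_one_div, div_self hp0.ne', ENNReal.rpow_one]
        rw [h4] at h3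
        exact h2.trans h3
      calc (pModulus p μ (⋃ j, Γ j)) ^ (1/p)
          ≤ (∫⁻ x, σ x ^ p ∂μ) ^ (1/p) :=
            ENNReal.rpow_le_rpow hModle (by positivity : (0:ℝ) ≤ 1/p)
        _ ≤ (∫⁻ x, g 0 x ^ p ∂μ) ^ (1/p) + (∫⁻ x, (∑' i, d i x) ^ p ∂μ) ^ (1/p) := hmink
        _ ≤ (S ^ (1/p) + ε) + ε := add_le_add hg0 htsum_le
        _ = S ^ (1/p) + 2 * ε := by rw [add_assoc, two_mul]
    have hcon : (pModulus p μ (⋃ j, Γ j)) ^ (1/p) ≤ S ^ (1/p) := by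
      apply ENNReal.le_of_forall_pos_le_add
      intro ε' hε' _
      set ε : ℝ≥0∞ := min 1 ((ε' : ℝ≥0∞)/2) with hεdef
      have hε0 : ε ≠ 0 := by
        have : (0:ℝ≥0∞) < min 1 ((ε' : ℝ≥0∞)/2) :=
          lt_min one_pos (ENNReal.div_pos (by exact_mod_cast hε'.ne') (by norm_num))
        exact this.ne'
      have := key ε hε0 (min_le_left _ _) (ne_top_of_le_ne_top one_ne_top (min_le_left _ _))
      refine this.trans (add_le_add_right ?_ _)
      calc 2 * ε ≤ 2 * ((ε' : ℝ≥0∞)/2) := mul_le_mul_right (min_le_right _ _) 2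
        _ = (ε' : ℝ≥0∞) := ENNReal.mul_div_cancel' (by norm_num) (by norm_num)
    have hfinal := ENNReal.rpow_le_rpow hcon hp0.le
    rwa [← ENNReal.rpow_mul, ← ENNReal.rpow_mul, one_div_mul_cancel hp0.ne',
      ENNReal.rpow_one, ENNReal.rpow_one] at hfinal
  rw [hmain]
  exact tendsto_atTop_iSup hβmono
end

section
/- Let Ω ⊂ X be open and let f: Ω → Y be continuous. Suppose μ̃ ≥ μ is a Borel regular outer measure on X that is doubling within Ω, and that E ⊂ Ω has σ-finite ℋ̃¹-measure (codimension-1 Hausdorff measure with respect to μ̃). Then Mod_1(Γ) = 0 for the family Γ := {curves γ with image in Ω : ℋ¹(f(γ ∩ E)) > 0}, where γ ∩ E denotes the intersection of the image of γ with E. -/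
open Set Metric MeasureTheory Filter ENNReal NNReal TopologicalSpace

noncomputable section AuxY

variable {Y : Type*} [MetricSpace Y]

/-- Hausdorff `1`-content at scale `r`. -/
noncomputable def YCont (r : ℝ≥0∞) (S : Set Y) : ℝ≥0∞ :=
  ⨅ (t : ℕ → Set Y) (_ : S ⊆ ⋃ n, t n) (_ : ∀ n, EMetric.diam (t n) ≤ r),
    ∑' n, EMetric.diam (t n)

lemma hausdorff_le_iSup_YCont [MeasurableSpace Y] [BorelSpace Y] (s : Set Y) :
    μH[1] s ≤ ⨆ (r : ℝ≥0∞) (_ : 0 < r), YCont r s := by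
  rw [MeasureTheory.Measure.hausdorffMeasure_apply]
  refine iSup_mono fun r => iSup_mono fun _ => ?_
  refine le_iInf fun t => le_iInf fun hcov => le_iInf fun hd => ?_
  refine le_trans (iInf₂_le t hcov) (le_trans (iInf_le _ hd) (ENNReal.tsum_le_tsum fun n => ?_))
  rcases Set.eq_empty_or_nonempty (t n) with h | h
  · simp [h]
  · simp [h, ENNReal.rpow_one, EMetric.diam]

lemma YCont_mono (r : ℝ≥0∞) {S T : Set Y} (h : S ⊆ T) : YCont r S ≤ YCont r T := by
  refine le_iInf fun t => le_iInf fun hcov => le_iInf fun hd => ?_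
  exact le_trans (iInf₂_le t (h.trans hcov)) (iInf_le _ hd)

lemma YCont_anti {r r' : ℝ≥0∞} (h : r ≤ r') (S : Set Y) : YCont r' S ≤ YCont r S := by
  refine le_iInf fun t => le_iInf fun hcov => le_iInf fun hd => ?_
  exact le_trans (iInf₂_le t hcov) (iInf_le _ fun n => (hd n).trans h)

lemma YCont_le_of_cover {ι : Type*} [Countable ι] (r : ℝ≥0∞) (S : Set Y) (U : ι → Set Y)
    (hd : ∀ i, EMetric.diam (U i) ≤ r) (hcov : S ⊆ ⋃ i, U i) :
    YCont r S ≤ ∑' i, EMetric.diam (U i) := by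
  obtain ⟨g, hg⟩ := Countable.exists_injective_nat ι
  set t : ℕ → Set Y := Function.extend g U (fun _ => (∅ : Set Y)) with ht
  have htapp : ∀ i, t (g i) = U i := fun i => hg.extend_apply _ _ _
  have hcov' : S ⊆ ⋃ n, t n := by
    intro x hx
    rcases mem_iUnion.1 (hcov hx) with ⟨i, hi⟩
    exact mem_iUnion.2 ⟨g i, by rw [htapp]; exact hi⟩
  have hdt : ∀ n, EMetric.diam (t n) ≤ r := by
    intro n
    rcases em (∃ i, g i = n) with ⟨i, rfl⟩ | h
    · rw [htapp]; exact hd i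
    · rw [ht, Function.extend_apply' _ _ _ h]; simp [EMetric.diam]
  refine le_trans (le_trans (iInf₂_le t hcov') (iInf_le _ hdt)) (le_of_eq ?_)
  have heq : ∀ n, EMetric.diam (t n) = Function.extend g (fun i => EMetric.diam (U i)) (fun _ => 0) n := by
    intro n
    rcases em (∃ i, g i = n) with ⟨i, rfl⟩ | h
    · rw [htapp, hg.extend_apply]
    · rw [ht, Function.extend_apply' _ _ _ h, Function.extend_apply' _ _ _ h]; simp [EMetric.diam]
  rw [tsum_congr heq]
  have hsupp : Function.support (Function.extend g (fun i => EMetric.diam (U i)) fun _ => 0)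
      ⊆ Set.range g := Function.support_subset_iff'.2 fun n hn => Function.extend_apply' _ _ _ hn
  rw [← hg.tsum_eq hsupp]
  exact tsum_congr fun i => by rw [hg.extend_apply]

lemma YCont_iUnion_le (r : ℝ≥0∞) (S : ℕ → Set Y) :
    YCont r (⋃ l, S l) ≤ ∑' l, YCont r (S l) := by
  by_cases htop : ∃ l, YCont r (S l) = ⊤
  · obtain ⟨l, hl⟩ := htop
    rw [ENNReal.tsum_eq_top_of_eq_top ⟨l, hl⟩]
    exact le_top
  push_neg at htop
  refine ENNReal.le_of_forall_pos_le_add fun ε hε _ => ?_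
  have hchoice : ∀ l : ℕ, ∃ t : ℕ → Set Y, (S l ⊆ ⋃ n, t n) ∧ (∀ n, EMetric.diam (t n) ≤ r) ∧
      ∑' n, EMetric.diam (t n) ≤ YCont r (S l) + ε * (2:ℝ≥0∞)⁻¹ ^ (l+1) := by
    intro l
    have hlt : YCont r (S l) < YCont r (S l) + ε * (2:ℝ≥0∞)⁻¹ ^ (l+1) := by
      refine ENNReal.lt_add_right (htop l) ?_
      exact mul_ne_zero (by exact_mod_cast hε.ne') (pow_ne_zero _ (by simp))
    simp only [YCont, iInf_lt_iff] at hlt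
    obtain ⟨t, hcov, hd, hlt⟩ := hlt
    exact ⟨t, hcov, hd, hlt.le⟩
  choose T hTcov hTd hTsum using hchoice
  let e : ℕ × ℕ ≃ ℕ := Denumerable.eqv (ℕ × ℕ)
  set t : ℕ → Set Y := fun n => T (e.symm n).1 (e.symm n).2 with ht
  have hcov : (⋃ l, S l) ⊆ ⋃ n, t n := by
    intro x hx
    rcases mem_iUnion.1 hx with ⟨l, hl⟩
    rcases mem_iUnion.1 (hTcov l hl) with ⟨j, hj⟩
    refine mem_iUnion.2 ⟨e (l, j), ?_⟩
    simp only [ht, Equiv.symm_apply_apply]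
    exact hj
  have hd : ∀ n, EMetric.diam (t n) ≤ r := fun n => hTd _ _
  have hsum : ∑' n, EMetric.diam (t n) ≤ (∑' l, YCont r (S l)) + ε := by
    have h1 : ∑' n, EMetric.diam (t n) = ∑' p : ℕ × ℕ, EMetric.diam (T p.1 p.2) := by
      rw [← Equiv.tsum_eq e.symm (fun p : ℕ × ℕ => EMetric.diam (T p.1 p.2))]
    rw [h1, ENNReal.tsum_prod (f := fun l j => EMetric.diam (T l j))]
    calc ∑' l, ∑' j, EMetric.diam (T l j)
        ≤ ∑' l, (YCont r (S l) + ε * (2:ℝ≥0∞)⁻¹ ^ (l+1)) := ENNReal.tsum_le_tsum hTsum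
      _ = (∑' l, YCont r (S l)) + ε * ∑' l, (2:ℝ≥0∞)⁻¹ ^ (l+1) := by
          rw [ENNReal.tsum_add, ENNReal.tsum_mul_left]
      _ ≤ (∑' l, YCont r (S l)) + ε * 1 := by
          gcongr
          have h2 : ∑' l : ℕ, (2:ℝ≥0∞)⁻¹ ^ (l+1) = 2⁻¹ * ∑' l : ℕ, (2:ℝ≥0∞)⁻¹ ^ l := by
            simp_rw [pow_succ, mul_comm]
            rw [ENNReal.tsum_mul_left]
          rw [h2, ENNReal.tsum_geometric]
          rw [ENNReal.one_sub_inv_two]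
          simp [ENNReal.inv_mul_cancel]
      _ = (∑' l, YCont r (S l)) + ε := by rw [mul_one]
  calc YCont r (⋃ l, S l) ≤ ∑' n, EMetric.diam (t n) :=
        le_trans (iInf₂_le t hcov) (iInf_le _ hd)
    _ ≤ (∑' l, YCont r (S l)) + ε := hsum
end AuxY

section AuxX
variable {X : Type*} [MetricSpace X] [MeasurableSpace X] (μt : Measure X)

lemma codimHContent_le_cover {p R : ℝ} {A : Set X} {I : Set (X × ℝ)} (hc : I.Countable)
    (h1 : ∀ b ∈ I, 0 < b.2 ∧ b.2 ≤ R) (h2 : A ⊆ ⋃ b ∈ I, Metric.ball b.1 b.2) :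
    codimHContent μt p R A ≤ ∑' b : I, μt (Metric.ball b.1.1 b.1.2) / ENNReal.ofReal (b.1.2 ^ p) :=
  iInf_le_of_le I (iInf_le_of_le hc (iInf_le_of_le h1 (iInf_le _ h2)))

lemma exists_cover_of_codimHContent_lt {p R : ℝ} {A : Set X} {c : ℝ≥0∞}
    (h : codimHContent μt p R A < c) :
    ∃ I : Set (X × ℝ), I.Countable ∧ (∀ b ∈ I, 0 < b.2 ∧ b.2 ≤ R) ∧
      (A ⊆ ⋃ b ∈ I, Metric.ball b.1 b.2) ∧
      ∑' b : I, μt (Metric.ball b.1.1 b.1.2) / ENNReal.ofReal (b.1.2 ^ p) < c := by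
  simp only [codimHContent, iInf_lt_iff] at h
  obtain ⟨I, hc, h1, h2, hlt⟩ := h
  exact ⟨I, hc, h1, h2, hlt⟩

lemma codimHContent_mono {p R : ℝ} {A B : Set X} (h : A ⊆ B) :
    codimHContent μt p R A ≤ codimHContent μt p R B := by
  refine le_iInf fun I => le_iInf fun hc => le_iInf fun h1 => le_iInf fun h2 => ?_
  exact codimHContent_le_cover μt hc h1 (h.trans h2)

lemma codimHContent_anti {p R R' : ℝ} (h : R ≤ R') (A : Set X) :
    codimHContent μt p R' A ≤ codimHContent μt p R A := by
  refine le_iInf fun I => le_iInf fun hc => le_iInf fun h1 => le_iInf fun h2 => ?_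
  exact codimHContent_le_cover μt hc (fun b hb => ⟨(h1 b hb).1, (h1 b hb).2.trans h⟩) h2

lemma codimHContent_le_codimH {p R : ℝ} (hR : 0 < R) (A : Set X) :
    codimHContent μt p R A ≤ codimH μt p A :=
  le_iSup₂ (f := fun (R : ℝ) (_ : 0 < R) => codimHContent μt p R A) R hR

lemma codimH_mono {p : ℝ} {A B : Set X} (h : A ⊆ B) : codimH μt p A ≤ codimH μt p B :=
  iSup_mono fun _ => iSup_mono fun _ => codimHContent_mono μt h

lemma codimH_pair_superadd {p : ℝ} {A B : Set X} {δ : ℝ} (hδ : 0 < δ)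
    (hsep : ∀ a ∈ A, ∀ b ∈ B, δ ≤ dist a b) :
    codimH μt p A + codimH μt p B ≤ codimH μt p (A ∪ B) := by
  have key : ∀ R : ℝ, 0 < R → R ≤ δ / 3 →
      codimHContent μt p R A + codimHContent μt p R B ≤ codimHContent μt p R (A ∪ B) := by
    intro R hR hRδ
    refine le_iInf fun I => le_iInf fun hc => le_iInf fun h1 => le_iInf fun h2 => ?_
    set IA : Set (X × ℝ) := I ∩ {b | (Metric.ball b.1 b.2 ∩ A).Nonempty} with hIA
    set IB : Set (X × ℝ) := I ∩ {b | (Metric.ball b.1 b.2 ∩ B).Nonempty} with hIB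
    have hdisj : Disjoint IA IB := by
      rw [Set.disjoint_left]
      rintro b ⟨hbI, a, haball, haA⟩ ⟨-, b', hbball, hbB⟩
      have h3 : dist a b' < δ := by
        calc dist a b' ≤ dist a b.1 + dist b.1 b' := dist_triangle _ _ _
          _ < b.2 + b.2 := by
              rw [mem_ball] at haball
              rw [mem_ball'] at hbball
              exact add_lt_add haball hbball
          _ ≤ R + R := add_le_add (h1 b hbI).2 (h1 b hbI).2
          _ ≤ δ / 3 + δ / 3 := add_le_add hRδ hRδ
          _ < δ := by linarith
      exact absurd (hsep a haA b' hbB) (not_le.2 h3)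
    have hcovA : A ⊆ ⋃ b ∈ IA, Metric.ball b.1 b.2 := by
      intro x hx
      rcases mem_iUnion₂.1 (h2 (Or.inl hx)) with ⟨b, hbI, hxb⟩
      exact mem_iUnion₂.2 ⟨b, ⟨hbI, ⟨x, hxb, hx⟩⟩, hxb⟩
    have hcovB : B ⊆ ⋃ b ∈ IB, Metric.ball b.1 b.2 := by
      intro x hx
      rcases mem_iUnion₂.1 (h2 (Or.inr hx)) with ⟨b, hbI, hxb⟩
      exact mem_iUnion₂.2 ⟨b, ⟨hbI, ⟨x, hxb, hx⟩⟩, hxb⟩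
    calc codimHContent μt p R A + codimHContent μt p R B
        ≤ (∑' b : IA, μt (Metric.ball b.1.1 b.1.2) / ENNReal.ofReal (b.1.2 ^ p)) +
          ∑' b : IB, μt (Metric.ball b.1.1 b.1.2) / ENNReal.ofReal (b.1.2 ^ p) :=
          add_le_add (codimHContent_le_cover μt (hc.mono Set.inter_subset_left)
              (fun b hb => h1 b hb.1) hcovA)
            (codimHContent_le_cover μt (hc.mono Set.inter_subset_left)
              (fun b hb => h1 b hb.1) hcovB)
      _ = ∑' b : ↑(IA ∪ IB), μt (Metric.ball b.1.1 b.1.2) / ENNReal.ofReal (b.1.2 ^ p) :=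
          (ENNReal.summable.tsum_union_disjoint (f := fun b : X × ℝ => μt (Metric.ball b.1 b.2) / ENNReal.ofReal (b.2 ^ p))
            hdisj ENNReal.summable).symm
      _ ≤ ∑' b : I, μt (Metric.ball b.1.1 b.1.2) / ENNReal.ofReal (b.1.2 ^ p) :=
          ENNReal.tsum_mono_subtype (fun b : X × ℝ => μt (Metric.ball b.1 b.2) / ENNReal.ofReal (b.2 ^ p))
            (Set.union_subset Set.inter_subset_left Set.inter_subset_left)
  -- now assemble the suprema
  have h3 : (0:ℝ) < δ / 3 := by linarith
  have hne : Nonempty {R : ℝ // 0 < R} := ⟨⟨δ / 3, h3⟩⟩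
  rw [codimH, codimH, iSup_subtype', iSup_subtype']
  refine ENNReal.iSup_add_iSup_le fun R₁ R₂ => ?_
  set R : ℝ := min (min R₁.1 R₂.1) (δ / 3) with hRdef
  have hR : 0 < R := lt_min (lt_min R₁.2 R₂.2) h3
  calc codimHContent μt p R₁.1 A + codimHContent μt p R₂.1 B
      ≤ codimHContent μt p R A + codimHContent μt p R B :=
        add_le_add (codimHContent_anti μt ((min_le_left _ _).trans (min_le_left _ _)) A)
          (codimHContent_anti μt ((min_le_left _ _).trans (min_le_right _ _)) B)
    _ ≤ codimHContent μt p R (A ∪ B) := key R hR (min_le_right _ _)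
    _ ≤ codimH μt p (A ∪ B) := codimHContent_le_codimH μt hR _

end AuxX

section Aux2
variable {X : Type*} [MetricSpace X] [MeasurableSpace X] (μt : Measure X)

lemma sum_codimH_le_of_sep {p : ℝ} (Q : ℕ → Set X) (Δ : ℕ → ℝ) (hΔ : ∀ j, 0 < Δ j)
    (hanti : ∀ j k, j ≤ k → Δ k ≤ Δ j)
    (hsep : ∀ j k, j < k → ∀ a ∈ Q j, ∀ b ∈ Q k, Δ j ≤ dist a b) (F : Set X)
    (hQF : ∀ j, Q j ⊆ F) : ∑' j, codimH μt p (Q j) ≤ codimH μt p F := by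
  refine ENNReal.tsum_le_of_sum_range_le fun N => ?_
  have key : ∀ N, ∑ j ∈ Finset.range N, codimH μt p (Q j)
      ≤ codimH μt p (⋃ j ∈ Finset.range N, Q j) := by
    intro N
    induction N with
    | zero => simp
    | succ N ih =>
      have hsepAB : ∀ a ∈ ⋃ j ∈ Finset.range N, Q j, ∀ b ∈ Q N, Δ N ≤ dist a b := by
        intro a ha b hb
        rcases mem_iUnion₂.1 ha with ⟨j, hj, haj⟩
        have hjN : j < N := Finset.mem_range.1 hj
        calc Δ N ≤ Δ j := hanti j N hjN.le
          _ ≤ dist a b := hsep j N hjN a haj b hb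
      calc ∑ j ∈ Finset.range (N+1), codimH μt p (Q j)
          = (∑ j ∈ Finset.range N, codimH μt p (Q j)) + codimH μt p (Q N) :=
            Finset.sum_range_succ _ _
        _ ≤ codimH μt p (⋃ j ∈ Finset.range N, Q j) + codimH μt p (Q N) :=
            add_le_add_left ih _
        _ ≤ codimH μt p ((⋃ j ∈ Finset.range N, Q j) ∪ Q N) :=
            codimH_pair_superadd μt (hΔ N) hsepAB
        _ ≤ codimH μt p (⋃ j ∈ Finset.range (N+1), Q j) := by
            refine codimH_mono μt ?_
            intro x hx
            rcases hx with hx | hx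
            · rcases mem_iUnion₂.1 hx with ⟨j, hj, hxj⟩
              exact mem_iUnion₂.2 ⟨j, Finset.mem_range.2
                (by have := Finset.mem_range.1 hj; omega), hxj⟩
            · exact mem_iUnion₂.2 ⟨N, Finset.self_mem_range_succ N, hx⟩
  exact (key N).trans (codimH_mono μt (Set.iUnion₂_subset fun j _ => hQF j))

lemma tsum_codimH_le_two_mul {p : ℝ} (P : ℕ → Set X) (F : Set X) (hPF : ∀ l, P l ⊆ F)
    (Δ : ℕ → ℝ) (hΔ : ∀ l, 0 < Δ l) (hanti : ∀ j k, j ≤ k → Δ k ≤ Δ j)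
    (hsep : ∀ l l', l + 2 ≤ l' → ∀ a ∈ P l, ∀ b ∈ P l', Δ l ≤ dist a b) :
    ∑' l, codimH μt p (P l) ≤ 2 * codimH μt p F := by
  rw [← tsum_even_add_odd (f := fun l => codimH μt p (P l)) ENNReal.summable ENNReal.summable,
    two_mul]
  refine add_le_add ?_ ?_
  · refine sum_codimH_le_of_sep μt (fun j => P (2*j)) (fun j => Δ (2*j)) (fun j => hΔ _)
      (fun j k hjk => hanti _ _ (by omega)) (fun j k hjk a ha b hb => ?_) F (fun j => hPF _)
    exact hsep (2*j) (2*k) (by omega) a ha b hb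
  · refine sum_codimH_le_of_sep μt (fun j => P (2*j+1)) (fun j => Δ (2*j+1)) (fun j => hΔ _)
      (fun j k hjk => hanti _ _ (by omega)) (fun j k hjk a ha b hb => ?_) F (fun j => hPF _)
    exact hsep (2*j+1) (2*k+1) (by omega) a ha b hb

end Aux2

section AuxC
variable {X : Type*} [MetricSpace X]

/-- Superadditivity of `lintegral` over countable sums (no measurability needed). -/
lemma tsum_lintegral_le {α : Type*} [MeasurableSpace α] {ι : Type*} [Countable ι]
    (ν : Measure α) (g : ι → α → ℝ≥0∞) :
    ∑' i, ∫⁻ s, g i s ∂ν ≤ ∫⁻ s, ∑' i, g i s ∂ν := by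
  rw [ENNReal.tsum_eq_iSup_sum]
  refine iSup_le fun F => ?_
  classical
  have h1 : ∀ (F : Finset ι), (∑ i ∈ F, ∫⁻ s, g i s ∂ν) ≤ ∫⁻ s, ∑ i ∈ F, g i s ∂ν := by
    intro F
    induction F using Finset.induction_on with
    | empty => simp
    | insert _ _ hnotmem ih =>
      rename_i a F'
      rw [Finset.sum_insert hnotmem]
      calc (∫⁻ s, g a s ∂ν) + ∑ i ∈ F', ∫⁻ s, g i s ∂ν
          ≤ (∫⁻ s, g a s ∂ν) + ∫⁻ s, ∑ i ∈ F', g i s ∂ν := add_le_add_right ih _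
        _ ≤ ∫⁻ s, (g a s + ∑ i ∈ F', g i s) ∂ν := MeasureTheory.le_lintegral_add _ _
        _ = ∫⁻ s, ∑ i ∈ insert a F', g i s ∂ν := by
            refine lintegral_congr fun s => ?_
            rw [Finset.sum_insert hnotmem]
  refine (h1 F).trans (lintegral_mono fun s => ?_)
  exact ENNReal.sum_le_tsum F

/-- If a curve meets a ball of radius `r ≤ len`, it spends time at least `r`
in the concentric ball of radius `2r`. -/
lemma curve_time_in_ball (γ : Curve X) {x : X} {r : ℝ} (hr : 0 < r) (hrlen : r ≤ γ.len)
    {t₀ : ℝ} (ht₀ : t₀ ∈ Set.Icc 0 γ.len) (hx : γ.toFun t₀ ∈ ball x r) :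
    ∃ a b : ℝ, Set.Icc a b ⊆ Set.Icc 0 γ.len ∧ r ≤ b - a ∧
      ∀ s ∈ Set.Icc a b, γ.toFun s ∈ ball x (2 * r) := by
  obtain ⟨ht₀0, ht₀l⟩ := ht₀
  refine ⟨max 0 (t₀ - r), min γ.len (t₀ + r), ?_, ?_, ?_⟩
  · exact Set.Icc_subset_Icc (le_max_left _ _) (min_le_left _ _)
  · have h1 : max 0 (t₀ - r) + r = max r t₀ := by
      rw [← max_add_add_right, zero_add, sub_add_cancel]
    have h2 : max r t₀ ≤ min γ.len (t₀ + r) :=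
      le_min (max_le hrlen ht₀l) (max_le (by linarith) (by linarith))
    linarith [h1 ▸ h2]
  · intro s hs
    have hs1 : t₀ - r ≤ s := le_trans (le_max_right _ _) hs.1
    have hs2 : s ≤ t₀ + r := le_trans hs.2 (min_le_right _ _)
    have hsIcc : s ∈ Set.Icc 0 γ.len :=
      ⟨le_trans (le_max_left _ _) hs.1, le_trans hs.2 (min_le_left _ _)⟩
    have hd : dist (γ.toFun s) (γ.toFun t₀) ≤ r := by
      have := γ.lipschitz.dist_le_mul s hsIcc t₀ ⟨ht₀0, ht₀l⟩
      have habs : |s - t₀| ≤ r := abs_le.2 ⟨by linarith, by linarith⟩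
      calc dist (γ.toFun s) (γ.toFun t₀) ≤ 1 * dist s t₀ := by exact_mod_cast this
        _ = |s - t₀| := by rw [one_mul, Real.dist_eq]
        _ ≤ r := habs
    have : dist (γ.toFun s) x < 2 * r := by
      calc dist (γ.toFun s) x ≤ dist (γ.toFun s) (γ.toFun t₀) + dist (γ.toFun t₀) x :=
            dist_triangle _ _ _
        _ < r + r := add_lt_add_of_le_of_lt hd (mem_ball.1 hx)
        _ = 2 * r := by ring
    exact mem_ball.2 this

end AuxC

section AuxM
variable {X : Type*} [MetricSpace X] [MeasurableSpace X]

lemma pModulus_le {p : ℝ} (μ : Measure X) {Γ : Set (Curve X)}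
    (ρ : X → ℝ≥0∞) (hm : Measurable ρ) (ha : ∀ γ ∈ Γ, 1 ≤ arcCurveIntegral ρ γ) :
    pModulus p μ Γ ≤ ∫⁻ x, ρ x ^ p ∂μ :=
  iInf_le_of_le ρ (iInf_le_of_le hm (iInf_le _ ha))

lemma pModulus_mono {p : ℝ} (μ : Measure X) {Γ Γ' : Set (Curve X)} (h : Γ ⊆ Γ') :
    pModulus p μ Γ ≤ pModulus p μ Γ' :=
  le_iInf fun ρ => le_iInf fun hm => le_iInf fun ha =>
    pModulus_le μ ρ hm fun γ hγ => ha γ (h hγ)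

lemma pModulus_zero_iff {p : ℝ} (μ : Measure X) {Γ : Set (Curve X)}
    (h : pModulus p μ Γ = 0) {c : ℝ≥0∞} (hc : 0 < c) :
    ∃ ρ : X → ℝ≥0∞, Measurable ρ ∧ (∀ γ ∈ Γ, 1 ≤ arcCurveIntegral ρ γ) ∧ ∫⁻ x, ρ x ^ p ∂μ < c := by
  have h2 : pModulus p μ Γ < c := h ▸ hc
  simp only [pModulus, iInf_lt_iff] at h2
  obtain ⟨ρ, hm, ha, hlt⟩ := h2
  exact ⟨ρ, hm, ha, hlt⟩

lemma pModulus_iUnion_zero {ι : Type*} [Countable ι] (μ : Measure X) (T : ι → Set (Curve X))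
    (h : ∀ i, pModulus 1 μ (T i) = 0) : pModulus 1 μ (⋃ i, T i) = 0 := by
  refine le_antisymm ?_ (zero_le)
  refine ENNReal.le_of_forall_pos_le_add fun ε hε _ => ?_
  rw [zero_add]
  cases isEmpty_or_nonempty ι
  · have : (⋃ i, T i) = ∅ := Set.iUnion_of_empty _
    rw [this]
    refine le_trans (pModulus_le μ (fun _ => 0) measurable_const (fun γ hγ => absurd hγ (by simp)))
      ?_
    simp
  obtain ⟨enc, henc⟩ := Countable.exists_injective_nat ι
  have hchoice : ∀ i : ι, ∃ ρ : X → ℝ≥0∞, Measurable ρ ∧ (∀ γ ∈ T i, 1 ≤ arcCurveIntegral ρ γ) ∧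
      ∫⁻ x, ρ x ^ (1:ℝ) ∂μ < (ε : ℝ≥0∞) * (2:ℝ≥0∞)⁻¹ ^ (enc i + 1) := by
    intro i
    refine pModulus_zero_iff μ (h i) ?_
    have : ((ε : ℝ≥0∞) * (2:ℝ≥0∞)⁻¹ ^ (enc i + 1)) ≠ 0 :=
      mul_ne_zero (by exact_mod_cast hε.ne') (pow_ne_zero _ (by simp))
    exact pos_iff_ne_zero.2 this
  choose ρs hmeas hadm henergy using hchoice
  set ρ : X → ℝ≥0∞ := fun x => ∑' i, ρs i x with hρ
  have hm : Measurable ρ := Measurable.ennreal_tsum hmeas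
  have ha : ∀ γ ∈ ⋃ i, T i, 1 ≤ arcCurveIntegral ρ γ := by
    intro γ hγ
    rcases mem_iUnion.1 hγ with ⟨i, hi⟩
    refine le_trans (hadm i γ hi) ?_
    exact lintegral_mono fun s => ENNReal.le_tsum i
  refine le_trans (pModulus_le μ ρ hm ha) ?_
  have : ∫⁻ x, ρ x ^ (1:ℝ) ∂μ = ∑' i, ∫⁻ x, ρs i x ^ (1:ℝ) ∂μ := by
    simp only [ENNReal.rpow_one]
    exact lintegral_tsum fun i => (hmeas i).aemeasurable
  rw [this]
  calc ∑' i, ∫⁻ x, ρs i x ^ (1:ℝ) ∂μ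
      ≤ ∑' i, (ε : ℝ≥0∞) * (2:ℝ≥0∞)⁻¹ ^ (enc i + 1) :=
        ENNReal.tsum_le_tsum fun i => (henergy i).le
    _ ≤ ∑' n : ℕ, (ε : ℝ≥0∞) * (2:ℝ≥0∞)⁻¹ ^ (n + 1) :=
        tsum_comp_le_tsum_of_injective henc _
    _ = (ε : ℝ≥0∞) * ∑' n : ℕ, (2:ℝ≥0∞)⁻¹ ^ (n + 1) := ENNReal.tsum_mul_left
    _ ≤ (ε : ℝ≥0∞) * 1 := by
        gcongr
        have h2 : ∑' l : ℕ, (2:ℝ≥0∞)⁻¹ ^ (l+1) = 2⁻¹ * ∑' l : ℕ, (2:ℝ≥0∞)⁻¹ ^ l := by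
          simp_rw [pow_succ, mul_comm]
          rw [ENNReal.tsum_mul_left]
        rw [h2, ENNReal.tsum_geometric, ENNReal.one_sub_inv_two]
        simp [ENNReal.inv_mul_cancel]
    _ = (ε : ℝ≥0∞) := mul_one _

end AuxM


section ModAux

lemma mod_aux {X Y : Type*} [MetricSpace X] [MeasurableSpace X] [BorelSpace X] [MetricSpace Y]
    (μ : Measure X) (Ω : Set X) (hΩopen : IsOpen Ω)
    (f : X → Y) (hf : ContinuousOn f Ω)
    (μt : Measure X) (hle : ∀ S : Set X, μ S ≤ μt S)
    (Cd : ℝ≥0) (hdbl : DoublingWithinC μt Cd Ω)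
    (F : Set X) (hFΩ : F ⊆ Ω) (hM : codimH μt 1 F < ⊤) (m p : ℕ) :
    pModulus 1 μ {γ : Curve X | γ.In Ω ∧ 1 / (p + 1 : ℝ) ≤ γ.len ∧
      (1 : ℝ≥0∞) / (m + 1) < YCont ((1 : ℝ≥0∞) / (m + 1)) (f '' (γ.image ∩ F))} = 0 := by
  classical
  set M := codimH μt 1 F with hMdef
  refine le_antisymm ?_ (zero_le)
  refine ENNReal.le_of_forall_pos_le_add fun ε hε _ => ?_
  rw [zero_add]
  set K : ℝ≥0∞ := ((m : ℝ≥0∞) + 1) * Cd * (2 * M + 2) with hKdef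
  have hKtop : K ≠ ⊤ := by
    refine ENNReal.mul_ne_top (ENNReal.mul_ne_top ?_ ?_) ?_
    · exact ENNReal.add_ne_top.2 ⟨ENNReal.natCast_ne_top m, ENNReal.one_ne_top⟩
    · exact ENNReal.coe_ne_top
    · exact ENNReal.add_ne_top.2 ⟨ENNReal.mul_ne_top (by simp) hM.ne, by simp⟩
  -- choose n
  obtain ⟨n, hmn, hn0, hKn⟩ : ∃ n : ℕ, m + 1 ≤ n ∧ 0 < n ∧ K / n < ε := by
    by_cases hK0 : K = 0
    · refine ⟨m + 1, le_rfl, Nat.succ_pos m, ?_⟩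
      rw [hK0, ENNReal.zero_div]
      exact_mod_cast hε
    · have hεne : (ε : ℝ≥0∞) ≠ 0 := by exact_mod_cast hε.ne'
      obtain ⟨n₀, hn₀⟩ := ENNReal.exists_nat_gt (ENNReal.div_lt_top hKtop hεne).ne
      have hn₀ne : (n₀ : ℝ≥0∞) ≠ 0 := by
        intro h
        rw [h] at hn₀
        exact absurd hn₀ (by simp)
      have h1 : K < ↑n₀ * ε :=
        (ENNReal.div_lt_iff (Or.inl hεne) (Or.inl ENNReal.coe_ne_top)).1 hn₀
      refine ⟨max n₀ (m + 1), le_max_right _ _,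
        lt_of_lt_of_le (Nat.succ_pos m) (le_max_right _ _), ?_⟩
      rw [ENNReal.div_lt_iff (Or.inl ?_) (Or.inl (ENNReal.natCast_ne_top _))]
      · calc K < ↑n₀ * ε := h1
          _ ≤ ↑(max n₀ (m + 1)) * ε := by
              gcongr
              exact_mod_cast le_max_left _ _
          _ = ε * ↑(max n₀ (m + 1)) := mul_comm _ _
      · have : max n₀ (m + 1) ≠ 0 := by positivity
        exact_mod_cast this
  -- the sets U l
  set U : ℕ → Set X := fun l => {x | Metric.ball x (1 / ((l : ℝ) + 1)) ⊆ Ω ∧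
      EMetric.diam (f '' (Metric.ball x (1 / ((l : ℝ) + 1)) ∩ Ω)) ≤ ((n : ℝ≥0∞))⁻¹} with hUdef
  set Δ : ℕ → ℝ := fun l => 1 / ((l : ℝ) + 1) - 1 / ((l : ℝ) + 2) with hΔdef
  have hΔpos : ∀ l, 0 < Δ l := by
    intro l
    have h1 : (0:ℝ) < (l:ℝ) + 1 := by positivity
    have h2 : (0:ℝ) < (l:ℝ) + 2 := by positivity
    simp only [hΔdef, sub_pos]
    exact one_div_lt_one_div_of_lt h1 (by linarith)
  have hΔid : ∀ l : ℕ, Δ l = 1 / (((l:ℝ) + 1) * ((l:ℝ) + 2)) := by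
    intro l
    have h1 : ((l:ℝ) + 1) ≠ 0 := by positivity
    have h2 : ((l:ℝ) + 2) ≠ 0 := by positivity
    simp only [hΔdef]
    field_simp
    ring
  have hΔanti : ∀ j k : ℕ, j ≤ k → Δ k ≤ Δ j := by
    intro j k hjk
    rw [hΔid, hΔid]
    have hjr : (j:ℝ) ≤ k := by exact_mod_cast hjk
    apply one_div_le_one_div_of_le (by positivity)
    nlinarith
  have hUnbr : ∀ l, ∀ x ∈ U l, ∀ y : X, dist x y < Δ l → y ∈ U (l + 1) := by
    intro l x hx y hxy
    obtain ⟨hball, hdiam⟩ := hx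
    have hcast : 1 / (((l + 1 : ℕ):ℝ) + 1) = 1 / ((l:ℝ) + 2) := by push_cast; ring_nf
    have hsub : Metric.ball y (1 / (((l + 1 : ℕ):ℝ) + 1)) ⊆ Metric.ball x (1 / ((l:ℝ) + 1)) := by
      intro z hz
      rw [mem_ball] at hz ⊢
      rw [hcast] at hz
      calc dist z x ≤ dist z y + dist y x := dist_triangle _ _ _
        _ < 1 / ((l:ℝ) + 2) + Δ l := by
            rw [dist_comm y x]
            exact add_lt_add hz hxy
        _ = 1 / ((l:ℝ) + 1) := by simp only [hΔdef]; ring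
    exact ⟨hsub.trans hball,
      le_trans (EMetric.diam_mono (Set.image_mono (Set.inter_subset_inter_left Ω hsub))) hdiam⟩
  set P : ℕ → Set X := fun l => (F ∩ U l) \ ⋃ (l' : ℕ) (_ : l' < l), U l' with hPdef
  have hPF : ∀ l, P l ⊆ F := fun l => (Set.diff_subset).trans Set.inter_subset_left
  have hPcov : F ⊆ ⋃ l, P l := by
    intro x hx
    have hxΩ : x ∈ Ω := hFΩ hx
    have hninv : ((n : ℝ≥0∞))⁻¹ = ENNReal.ofReal (1 / (n:ℝ)) := by
      rw [one_div, ENNReal.ofReal_inv_of_pos (by exact_mod_cast hn0), ENNReal.ofReal_natCast]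
    have hUne : ∃ l, x ∈ U l := by
      obtain ⟨δ₁, hδ₁pos, hδ₁⟩ := Metric.isOpen_iff.1 hΩopen x hxΩ
      have hc := hf x hxΩ
      rw [Metric.continuousWithinAt_iff] at hc
      obtain ⟨δ₂, hδ₂pos, hδ₂⟩ := hc (1 / (2 * (n:ℝ))) (by positivity)
      obtain ⟨l, hl⟩ := exists_nat_one_div_lt (lt_min hδ₂pos hδ₁pos)
      refine ⟨l, fun z hz => hδ₁ (mem_ball.2 ?_), ?_⟩
      · exact lt_trans (mem_ball.1 hz) (lt_of_lt_of_le hl (min_le_right _ _))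
      · refine EMetric.diam_le ?_
        rintro u ⟨yu, ⟨hyub, hyuΩ⟩, rfl⟩ v ⟨yv, ⟨hyvb, hyvΩ⟩, rfl⟩
        have hlt2 : 1 / ((l:ℝ) + 1) < δ₂ := lt_of_lt_of_le hl (min_le_left _ _)
        have h1 : dist (f yu) (f x) < 1 / (2 * (n:ℝ)) :=
          hδ₂ hyuΩ (lt_trans (mem_ball.1 hyub) hlt2)
        have h2 : dist (f yv) (f x) < 1 / (2 * (n:ℝ)) :=
          hδ₂ hyvΩ (lt_trans (mem_ball.1 hyvb) hlt2)
        calc edist (f yu) (f yv) ≤ edist (f yu) (f x) + edist (f x) (f yv) :=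
              edist_triangle _ _ _
          _ ≤ ENNReal.ofReal (1 / (2 * (n:ℝ))) + ENNReal.ofReal (1 / (2 * (n:ℝ))) := by
              refine add_le_add ?_ ?_
              · rw [edist_dist]; exact ENNReal.ofReal_le_ofReal h1.le
              · rw [edist_dist, dist_comm]; exact ENNReal.ofReal_le_ofReal h2.le
          _ = ENNReal.ofReal (1 / (2 * (n:ℝ)) + 1 / (2 * (n:ℝ))) :=
              (ENNReal.ofReal_add (by positivity) (by positivity)).symm
          _ = ENNReal.ofReal (1 / (n:ℝ)) := by
              congr 1
              have hnr : (0:ℝ) < (n:ℝ) := by exact_mod_cast hn0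
              rw [← add_div]
              rw [show (1:ℝ) + 1 = 2 by norm_num]
              rw [div_eq_div_iff (by positivity) (by positivity)]
              ring
          _ = ((n : ℝ≥0∞))⁻¹ := hninv.symm
    refine mem_iUnion.2 ⟨Nat.find hUne, ⟨⟨hx, Nat.find_spec hUne⟩, ?_⟩⟩
    simp only [Set.mem_iUnion, not_exists]
    intro l' hl'
    exact Nat.find_min hUne hl'
  have hPsep : ∀ l l' : ℕ, l + 2 ≤ l' → ∀ a ∈ P l, ∀ b ∈ P l', Δ l ≤ dist a b := by
    intro l l' hll' a ha b hb
    by_contra hcon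
    push_neg at hcon
    have haU : a ∈ U l := ha.1.2
    have hbU : b ∈ U (l + 1) := hUnbr l a haU b hcon
    have hbnot : b ∉ U (l + 1) := by
      have h2 := hb.2
      simp only [Set.mem_iUnion, not_exists] at h2
      exact h2 (l + 1) (by omega)
    exact hbnot hbU
  have hsum2M : ∑' l, codimH μt 1 (P l) ≤ 2 * M :=
    tsum_codimH_le_two_mul μt P F hPF Δ hΔpos hΔanti hPsep
  -- the covers
  have hcovers : ∀ l : ℕ, ∃ I : Set (X × ℝ), I.Countable ∧
      (∀ b ∈ I, 0 < b.2 ∧ b.2 ≤ min (1 / (3 * ((l:ℝ) + 1))) (1 / ((p:ℝ) + 1))) ∧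
      (P l ⊆ ⋃ b ∈ I, Metric.ball b.1 b.2) ∧
      ∑' b : I, μt (Metric.ball b.1.1 b.1.2) / ENNReal.ofReal (b.1.2 ^ (1:ℝ))
        ≤ codimH μt 1 (P l) + (2 : ℝ≥0∞)⁻¹ ^ l := by
    intro l
    have hRpos : 0 < min (1 / (3 * ((l:ℝ) + 1))) (1 / ((p:ℝ) + 1)) :=
      lt_min (by positivity) (by positivity)
    have hlt : codimHContent μt 1 (min (1 / (3 * ((l:ℝ) + 1))) (1 / ((p:ℝ) + 1))) (P l)
        < codimH μt 1 (P l) + (2 : ℝ≥0∞)⁻¹ ^ l := by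
      refine lt_of_le_of_lt (codimHContent_le_codimH μt hRpos _) ?_
      refine ENNReal.lt_add_right ?_ (pow_ne_zero _ (by simp))
      exact (lt_of_le_of_lt (codimH_mono μt (hPF l)) hM).ne
    obtain ⟨I, h1, h2, h3, h4⟩ := exists_cover_of_codimHContent_lt μt hlt
    exact ⟨I, h1, h2, h3, h4.le⟩
  choose I hIc hIr hIcov hIsum using hcovers
  set J : ℕ → Set (X × ℝ) := fun l => {b ∈ I l | (Metric.ball b.1 b.2 ∩ P l).Nonempty} with hJdef
  have hJc : ∀ l, (J l).Countable := fun l => (hIc l).mono (Set.sep_subset _ _)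
  haveI : ∀ l, Countable (J l) := fun l => (hJc l).to_subtype
  have hkey : ∀ l, ∀ b ∈ J l, Metric.ball b.1 (2 * b.2) ⊆ Ω ∧
      EMetric.diam (f '' (Metric.ball b.1 (2 * b.2) ∩ Ω)) ≤ ((n : ℝ≥0∞))⁻¹ := by
    rintro l b ⟨hbI, a, haball, haP⟩
    obtain ⟨hb2pos, hb2le⟩ := hIr l b hbI
    have haU : a ∈ U l := haP.1.2
    have h3r : 3 * b.2 ≤ 1 / ((l:ℝ) + 1) := by
      have h1 : b.2 ≤ 1 / (3 * ((l:ℝ) + 1)) := hb2le.trans (min_le_left _ _)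
      have h2 : (0:ℝ) < (l:ℝ) + 1 := by positivity
      rw [le_div_iff₀ (by positivity)] at h1 ⊢
      linarith
    have hsub : Metric.ball b.1 (2 * b.2) ⊆ Metric.ball a (1 / ((l:ℝ) + 1)) := by
      intro y hy
      rw [mem_ball] at hy ⊢
      have hab : dist b.1 a < b.2 := by rw [dist_comm]; exact mem_ball.1 haball
      calc dist y a ≤ dist y b.1 + dist b.1 a := dist_triangle _ _ _
        _ < 2 * b.2 + b.2 := add_lt_add hy hab
        _ = 3 * b.2 := by ring
        _ ≤ 1 / ((l:ℝ) + 1) := h3r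
    exact ⟨hsub.trans haU.1,
      le_trans (EMetric.diam_mono (Set.image_mono (Set.inter_subset_inter_left Ω hsub))) haU.2⟩
  -- the test function
  set ρ : X → ℝ≥0∞ := fun x => ∑' (l : ℕ), ∑' (b : J l),
      Set.indicator (Metric.ball (b : X × ℝ).1 (2 * (b : X × ℝ).2))
        (fun _ => ((m : ℝ≥0∞) + 1) *
          EMetric.diam (f '' (Metric.ball (b : X × ℝ).1 (2 * (b : X × ℝ).2) ∩ Ω)) /
          ENNReal.ofReal (b : X × ℝ).2) x with hρdef
  have hρmeas : Measurable ρ := by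
    refine Measurable.ennreal_tsum fun l => Measurable.ennreal_tsum fun b => ?_
    exact Measurable.indicator measurable_const measurableSet_ball
  have hadm : ∀ γ ∈ {γ : Curve X | γ.In Ω ∧ 1 / (p + 1 : ℝ) ≤ γ.len ∧
      (1 : ℝ≥0∞) / (m + 1) < YCont ((1 : ℝ≥0∞) / (m + 1)) (f '' (γ.image ∩ F))},
      1 ≤ arcCurveIntegral ρ γ := by
    rintro γ ⟨hγΩ, hγlen, hγY⟩
    set S := f '' (γ.image ∩ F) with hSdef
    set term : ∀ l, J l → X → ℝ≥0∞ := fun l b x =>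
      Set.indicator (Metric.ball (b : X × ℝ).1 (2 * (b : X × ℝ).2))
        (fun _ => ((m : ℝ≥0∞) + 1) *
          EMetric.diam (f '' (Metric.ball (b : X × ℝ).1 (2 * (b : X × ℝ).2) ∩ Ω)) /
          ENNReal.ofReal (b : X × ℝ).2) x with htermdef
    -- Step A : superadditivity of the curve integral
    have hA : (∑' (l : ℕ), ∑' (b : J l), ∫⁻ s in Set.Icc (0:ℝ) γ.len, term l b (γ.toFun s))
        ≤ arcCurveIntegral ρ γ := by
      calc ∑' (l : ℕ), ∑' (b : J l), ∫⁻ s in Set.Icc (0:ℝ) γ.len, term l b (γ.toFun s)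
          ≤ ∑' (l : ℕ), ∫⁻ s in Set.Icc (0:ℝ) γ.len, ∑' (b : J l), term l b (γ.toFun s) :=
            ENNReal.tsum_le_tsum fun l => tsum_lintegral_le _ _
        _ ≤ ∫⁻ s in Set.Icc (0:ℝ) γ.len, ∑' (l : ℕ), ∑' (b : J l), term l b (γ.toFun s) :=
            tsum_lintegral_le _ _
        _ = arcCurveIntegral ρ γ := rfl
    -- Step B : per-ball lower bound
    have hB : ∀ (l : ℕ) (b : J l),
        (if (Metric.ball (b : X × ℝ).1 (b : X × ℝ).2 ∩ γ.image).Nonempty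
          then ((m : ℝ≥0∞) + 1) *
            EMetric.diam (f '' (Metric.ball (b : X × ℝ).1 (2 * (b : X × ℝ).2) ∩ Ω))
          else 0)
        ≤ ∫⁻ s in Set.Icc (0:ℝ) γ.len, term l b (γ.toFun s) := by
      intro l b
      split_ifs with hmeet
      · obtain ⟨z, hzball, hzim⟩ := hmeet
        obtain ⟨t₀, ht₀, hzt₀⟩ := hzim
        have hbJ : (b : X × ℝ) ∈ J l := b.2
        have hbI : (b : X × ℝ) ∈ I l := hbJ.1
        obtain ⟨hr0, hrle⟩ := hIr l _ hbI
        have hrlen : (b : X × ℝ).2 ≤ γ.len := by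
          refine le_trans (hrle.trans (min_le_right _ _)) ?_
          exact le_trans (le_of_eq (by norm_num)) hγlen
        have hzb : γ.toFun t₀ ∈ Metric.ball (b : X × ℝ).1 (b : X × ℝ).2 := hzt₀ ▸ hzball
        obtain ⟨a', b', hsub, hlen', hmem⟩ := curve_time_in_ball γ hr0 hrlen ht₀ hzb
        set c : ℝ≥0∞ := ((m : ℝ≥0∞) + 1) *
          EMetric.diam (f '' (Metric.ball (b : X × ℝ).1 (2 * (b : X × ℝ).2) ∩ Ω)) /
          ENNReal.ofReal (b : X × ℝ).2 with hcdef
        have hofr0 : ENNReal.ofReal (b : X × ℝ).2 ≠ 0 := by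
          simp [ENNReal.ofReal_eq_zero, not_le, hr0]
        have hofrt : ENNReal.ofReal (b : X × ℝ).2 ≠ ⊤ := ENNReal.ofReal_ne_top
        calc ((m : ℝ≥0∞) + 1) *
              EMetric.diam (f '' (Metric.ball (b : X × ℝ).1 (2 * (b : X × ℝ).2) ∩ Ω))
            = c * ENNReal.ofReal (b : X × ℝ).2 := by
              rw [hcdef, ENNReal.div_mul_cancel hofr0 hofrt]
          _ ≤ c * volume (Set.Icc a' b') := by
              rw [Real.volume_Icc]
              exact mul_le_mul_right (ENNReal.ofReal_le_ofReal hlen') c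
          _ = ∫⁻ s in Set.Icc (0:ℝ) γ.len, Set.indicator (Set.Icc a' b') (fun _ => c) s := by
              rw [lintegral_indicator_const measurableSet_Icc,
                Measure.restrict_apply measurableSet_Icc,
                Set.inter_eq_self_of_subset_left hsub]
          _ ≤ ∫⁻ s in Set.Icc (0:ℝ) γ.len, term l b (γ.toFun s) := by
              refine lintegral_mono fun s => ?_
              by_cases hs : s ∈ Set.Icc a' b'
              · have h1 : term l b (γ.toFun s) = c := by
                  simp only [htermdef]
                  rw [Set.indicator_of_mem (hmem s hs)]
                rw [Set.indicator_of_mem hs, h1]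
              · rw [Set.indicator_of_notMem hs]
                exact zero_le
      · exact zero_le
    -- Step C : covering bound for each piece
    have hC : ∀ l : ℕ, YCont ((n : ℝ≥0∞))⁻¹ (f '' (γ.image ∩ P l)) ≤
        ∑' (b : J l), (if (Metric.ball (b : X × ℝ).1 (b : X × ℝ).2 ∩ γ.image).Nonempty
          then EMetric.diam (f '' (Metric.ball (b : X × ℝ).1 (2 * (b : X × ℝ).2) ∩ Ω))
          else 0) := by
      intro l
      set V : J l → Set Y := fun b =>
        if (Metric.ball (b : X × ℝ).1 (b : X × ℝ).2 ∩ γ.image).Nonempty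
          then f '' (Metric.ball (b : X × ℝ).1 (2 * (b : X × ℝ).2) ∩ Ω) else ∅ with hVdef
      have hdV : ∀ b : J l, EMetric.diam (V b) ≤ ((n : ℝ≥0∞))⁻¹ := by
        intro b
        simp only [hVdef]
        split_ifs with h
        · exact (hkey l _ b.2).2
        · simp [EMetric.diam]
      have hcovV : f '' (γ.image ∩ P l) ⊆ ⋃ b, V b := by
        rintro y ⟨z, ⟨hzim, hzP⟩, rfl⟩
        rcases Set.mem_iUnion₂.1 (hIcov l hzP) with ⟨b, hbI, hzball⟩
        have hbJ : b ∈ J l := ⟨hbI, z, hzball, hzP⟩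
        have hmeet : (Metric.ball b.1 b.2 ∩ γ.image).Nonempty := ⟨z, hzball, hzim⟩
        refine Set.mem_iUnion.2 ⟨⟨b, hbJ⟩, ?_⟩
        simp only [hVdef, if_pos hmeet]
        refine ⟨z, ⟨?_, hFΩ (hPF l hzP)⟩, rfl⟩
        exact Metric.ball_subset_ball (by linarith [(hIr l b hbI).1]) hzball
      refine (YCont_le_of_cover _ _ V hdV hcovV).trans (le_of_eq (tsum_congr fun b => ?_))
      simp only [hVdef]
      split_ifs with h
      · rfl
      · simp [EMetric.diam]
    -- Step D : piecing together
    have hD : YCont ((n : ℝ≥0∞))⁻¹ S ≤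
        ∑' l, YCont ((n : ℝ≥0∞))⁻¹ (f '' (γ.image ∩ P l)) := by
      refine le_trans (YCont_mono _ ?_) (YCont_iUnion_le _ _)
      rintro y ⟨z, ⟨hzim, hzF⟩, rfl⟩
      rcases Set.mem_iUnion.1 (hPcov hzF) with ⟨l, hzl⟩
      exact Set.mem_iUnion.2 ⟨l, ⟨z, ⟨hzim, hzl⟩, rfl⟩⟩
    have hm1ne0 : ((m : ℝ≥0∞) + 1) ≠ 0 := by simp
    have hm1netop : ((m : ℝ≥0∞) + 1) ≠ ⊤ := by
      exact ENNReal.add_ne_top.2 ⟨ENNReal.natCast_ne_top m, ENNReal.one_ne_top⟩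
    have hscale : ((n : ℝ≥0∞))⁻¹ ≤ (1 : ℝ≥0∞) / ((m : ℝ≥0∞) + 1) := by
      rw [one_div]
      refine ENNReal.inv_le_inv.2 ?_
      exact_mod_cast hmn
    have hYn : (1 : ℝ≥0∞) / ((m : ℝ≥0∞) + 1) ≤ YCont ((n : ℝ≥0∞))⁻¹ S :=
      le_trans hγY.le (YCont_anti hscale S)
    calc (1 : ℝ≥0∞) = ((m : ℝ≥0∞) + 1) * ((1 : ℝ≥0∞) / ((m : ℝ≥0∞) + 1)) := by
          rw [ENNReal.mul_div_cancel hm1ne0 hm1netop]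
      _ ≤ ((m : ℝ≥0∞) + 1) * YCont ((n : ℝ≥0∞))⁻¹ S := mul_le_mul_right hYn _
      _ ≤ ((m : ℝ≥0∞) + 1) * ∑' l, YCont ((n : ℝ≥0∞))⁻¹ (f '' (γ.image ∩ P l)) :=
          mul_le_mul_right hD _
      _ ≤ ((m : ℝ≥0∞) + 1) * ∑' (l : ℕ), ∑' (b : J l),
            (if (Metric.ball (b : X × ℝ).1 (b : X × ℝ).2 ∩ γ.image).Nonempty
              then EMetric.diam (f '' (Metric.ball (b : X × ℝ).1 (2 * (b : X × ℝ).2) ∩ Ω))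
              else 0) :=
          mul_le_mul_right (ENNReal.tsum_le_tsum hC) _
      _ = ∑' (l : ℕ), ∑' (b : J l),
            (if (Metric.ball (b : X × ℝ).1 (b : X × ℝ).2 ∩ γ.image).Nonempty
              then ((m : ℝ≥0∞) + 1) *
                EMetric.diam (f '' (Metric.ball (b : X × ℝ).1 (2 * (b : X × ℝ).2) ∩ Ω))
              else 0) := by
          rw [← ENNReal.tsum_mul_left]
          refine tsum_congr fun l => ?_
          rw [← ENNReal.tsum_mul_left]
          refine tsum_congr fun b => ?_
          rw [mul_ite, mul_zero]
      _ ≤ ∑' (l : ℕ), ∑' (b : J l), ∫⁻ s in Set.Icc (0:ℝ) γ.len, term l b (γ.toFun s) :=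
          ENNReal.tsum_le_tsum fun l => ENNReal.tsum_le_tsum fun b => hB l b
      _ ≤ arcCurveIntegral ρ γ := hA
  have henergy : ∫⁻ x, ρ x ^ (1:ℝ) ∂μ ≤ K / n := by
    set term : ∀ l, J l → X → ℝ≥0∞ := fun l b x =>
      Set.indicator (Metric.ball (b : X × ℝ).1 (2 * (b : X × ℝ).2))
        (fun _ => ((m : ℝ≥0∞) + 1) *
          EMetric.diam (f '' (Metric.ball (b : X × ℝ).1 (2 * (b : X × ℝ).2) ∩ Ω)) /
          ENNReal.ofReal (b : X × ℝ).2) x with htermdef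
    have htermmeas : ∀ l (b : J l), Measurable (term l b) := by
      intro l b
      exact Measurable.indicator measurable_const measurableSet_ball
    have h1 : ∫⁻ x, ρ x ^ (1:ℝ) ∂μ = ∑' (l : ℕ), ∑' (b : J l), ∫⁻ x, term l b x ∂μ := by
      simp only [ENNReal.rpow_one]
      rw [hρdef]
      rw [lintegral_tsum fun l =>
        (Measurable.ennreal_tsum fun b => htermmeas l b).aemeasurable]
      exact tsum_congr fun l => lintegral_tsum fun b => (htermmeas l b).aemeasurable
    have h2 : ∀ l (b : J l), ∫⁻ x, term l b x ∂μ ≤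
        (((m : ℝ≥0∞) + 1) * Cd * ((n : ℝ≥0∞))⁻¹) *
          (μt (Metric.ball (b : X × ℝ).1 (b : X × ℝ).2) /
            ENNReal.ofReal ((b : X × ℝ).2 ^ (1:ℝ))) := by
      intro l b
      have hbJ : (b : X × ℝ) ∈ J l := b.2
      have hbI : (b : X × ℝ) ∈ I l := hbJ.1
      obtain ⟨hr0, hrle⟩ := hIr l _ hbI
      have hballΩ : Metric.ball (b : X × ℝ).1 (b : X × ℝ).2 ⊆ Ω :=
        (Metric.ball_subset_ball (by linarith)).trans (hkey l _ hbJ).1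
      have hdbl2 := (hdbl (b : X × ℝ).1 (b : X × ℝ).2 hr0 hballΩ).2.1
      have hd : EMetric.diam (f '' (Metric.ball (b : X × ℝ).1 (2 * (b : X × ℝ).2) ∩ Ω))
          ≤ ((n : ℝ≥0∞))⁻¹ := (hkey l _ hbJ).2
      have hμ2B : μ (Metric.ball (b : X × ℝ).1 (2 * (b : X × ℝ).2)) ≤
          (Cd : ℝ≥0∞) * μt (Metric.ball (b : X × ℝ).1 (b : X × ℝ).2) :=
        (hle _).trans hdbl2
      simp only [htermdef]
      rw [lintegral_indicator_const measurableSet_ball, Real.rpow_one]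
      calc ((m : ℝ≥0∞) + 1) *
            EMetric.diam (f '' (Metric.ball (b : X × ℝ).1 (2 * (b : X × ℝ).2) ∩ Ω)) /
            ENNReal.ofReal (b : X × ℝ).2 *
            μ (Metric.ball (b : X × ℝ).1 (2 * (b : X × ℝ).2))
          ≤ ((m : ℝ≥0∞) + 1) * ((n : ℝ≥0∞))⁻¹ / ENNReal.ofReal (b : X × ℝ).2 *
            ((Cd : ℝ≥0∞) * μt (Metric.ball (b : X × ℝ).1 (b : X × ℝ).2)) := by
            gcongr
        _ = (((m : ℝ≥0∞) + 1) * Cd * ((n : ℝ≥0∞))⁻¹) *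
            (μt (Metric.ball (b : X × ℝ).1 (b : X × ℝ).2) /
              ENNReal.ofReal (b : X × ℝ).2) := by
            simp only [div_eq_mul_inv]
            ring
    have h3 : ∀ l : ℕ, ∑' (b : J l),
        (μt (Metric.ball (b : X × ℝ).1 (b : X × ℝ).2) /
          ENNReal.ofReal ((b : X × ℝ).2 ^ (1:ℝ)))
        ≤ codimH μt 1 (P l) + (2 : ℝ≥0∞)⁻¹ ^ l := by
      intro l
      refine le_trans ?_ (hIsum l)
      exact ENNReal.tsum_mono_subtype
        (fun b : X × ℝ => μt (Metric.ball b.1 b.2) / ENNReal.ofReal (b.2 ^ (1:ℝ)))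
        (Set.sep_subset _ _)
    calc ∫⁻ x, ρ x ^ (1:ℝ) ∂μ
        = ∑' (l : ℕ), ∑' (b : J l), ∫⁻ x, term l b x ∂μ := h1
      _ ≤ ∑' (l : ℕ), ∑' (b : J l), (((m : ℝ≥0∞) + 1) * Cd * ((n : ℝ≥0∞))⁻¹) *
            (μt (Metric.ball (b : X × ℝ).1 (b : X × ℝ).2) /
              ENNReal.ofReal ((b : X × ℝ).2 ^ (1:ℝ))) :=
          ENNReal.tsum_le_tsum fun l => ENNReal.tsum_le_tsum fun b => h2 l b
      _ = (((m : ℝ≥0∞) + 1) * Cd * ((n : ℝ≥0∞))⁻¹) * ∑' (l : ℕ), ∑' (b : J l),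
            (μt (Metric.ball (b : X × ℝ).1 (b : X × ℝ).2) /
              ENNReal.ofReal ((b : X × ℝ).2 ^ (1:ℝ))) := by
          rw [← ENNReal.tsum_mul_left]
          exact tsum_congr fun l => (ENNReal.tsum_mul_left).symm ▸ rfl
      _ ≤ (((m : ℝ≥0∞) + 1) * Cd * ((n : ℝ≥0∞))⁻¹) * ∑' (l : ℕ),
            (codimH μt 1 (P l) + (2 : ℝ≥0∞)⁻¹ ^ l) :=
          mul_le_mul_right (ENNReal.tsum_le_tsum h3) _
      _ ≤ (((m : ℝ≥0∞) + 1) * Cd * ((n : ℝ≥0∞))⁻¹) * (2 * M + 2) := by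
          refine mul_le_mul_right ?_ _
          rw [ENNReal.tsum_add]
          refine add_le_add hsum2M ?_
          rw [ENNReal.tsum_geometric, ENNReal.one_sub_inv_two]
          simp
      _ = K / n := by
          rw [hKdef, ENNReal.div_eq_inv_mul]
          ring
  calc pModulus 1 μ _ ≤ ∫⁻ x, ρ x ^ (1:ℝ) ∂μ := pModulus_le μ ρ hρmeas hadm
    _ ≤ K / n := henergy
    _ ≤ ε := hKn.le

end ModAux
/-- Lemma 3.4: for a set `E` of σ-finite codimension-1 Hausdorff measure,
`1`-a.e. curve meets `E` in a set whose image has `ℋ¹`-measure zero. -/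
theorem mod_one_exceptional_set
    {X Y : Type*} [MetricSpace X] [MeasurableSpace X] [BorelSpace X]
    [ConnectedSpace X] [Nontrivial X]
    [MetricSpace Y] [MeasurableSpace Y] [BorelSpace Y] [TopologicalSpace.SeparableSpace Y]
    (μ : Measure X) (hμball : ∀ (x : X) (r : ℝ), μ (Metric.ball x r) < ⊤)
    (Ω : Set X) (hΩopen : IsOpen Ω)
    (f : X → Y) (hf : ContinuousOn f Ω)
    (μt : Measure X) (hle : ∀ S : Set X, μ S ≤ μt S)
    (hdbl : DoublingWithin μt Ω)
    (E : Set X) (hEΩ : E ⊆ Ω) (hEsf : SigmaFiniteCodimH μt 1 E) :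
    pModulus 1 μ {γ : Curve X | γ.In Ω ∧ 0 < μH[1] (f '' (γ.image ∩ E))} = 0 := by
  classical
  obtain ⟨Cd, hCd⟩ := hdbl
  obtain ⟨Ek, hEcov, hEfin⟩ := hEsf
  set T : ℕ × ℕ × ℕ → Set (Curve X) := fun q =>
    {γ : Curve X | γ.In Ω ∧ 1 / (q.2.2 + 1 : ℝ) ≤ γ.len ∧
      (1 : ℝ≥0∞) / (q.2.1 + 1) < YCont ((1 : ℝ≥0∞) / (q.2.1 + 1))
        (f '' (γ.image ∩ (Ek q.1 ∩ E)))} with hTdef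
  have hTzero : ∀ q, pModulus 1 μ (T q) = 0 := by
    rintro ⟨k, m, p⟩
    exact mod_aux μ Ω hΩopen f hf μt hle Cd hCd (Ek k ∩ E)
      (Set.inter_subset_right.trans hEΩ)
      (lt_of_le_of_lt (codimH_mono μt Set.inter_subset_left) (hEfin k)) m p
  have hsub : {γ : Curve X | γ.In Ω ∧ 0 < μH[1] (f '' (γ.image ∩ E))} ⊆ ⋃ q, T q := by
    rintro γ ⟨hγΩ, hγpos⟩
    have hlen0 : 0 < γ.len := by
      rcases lt_or_eq_of_le γ.len_nonneg with h | h
      · exact h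
      · exfalso
        have himg : γ.image = {γ.toFun 0} := by
          rw [Curve.image, ← h, Set.Icc_self, Set.image_singleton]
        have hsub1 : f '' (γ.image ∩ E) ⊆ {f (γ.toFun 0)} := by
          rw [himg]
          exact (Set.image_mono Set.inter_subset_left).trans (by simp)
        haveI := MeasureTheory.Measure.noAtoms_hausdorff Y (by norm_num : (0:ℝ) < 1)
        have h2 := measure_mono (μ := μH[1]) hsub1
        rw [measure_singleton] at h2
        exact absurd (lt_of_lt_of_le hγpos h2) (lt_irrefl 0)
    obtain ⟨p, hp⟩ := exists_nat_one_div_lt hlen0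
    have hksub : f '' (γ.image ∩ E) ⊆ ⋃ k, f '' (γ.image ∩ (Ek k ∩ E)) := by
      rintro y ⟨z, ⟨hzim, hzE⟩, rfl⟩
      rcases Set.mem_iUnion.1 (hEcov hzE) with ⟨k, hk⟩
      exact Set.mem_iUnion.2 ⟨k, ⟨z, ⟨hzim, hk, hzE⟩, rfl⟩⟩
    obtain ⟨k, hkpos⟩ : ∃ k, 0 < μH[1] (f '' (γ.image ∩ (Ek k ∩ E))) := by
      by_contra hcon
      push_neg at hcon
      have hzero : μH[1] (f '' (γ.image ∩ E)) = 0 := by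
        refine le_antisymm ?_ (zero_le)
        refine le_trans (measure_mono hksub) ?_
        refine le_trans (measure_iUnion_le _) ?_
        have : ∀ k, μH[1] (f '' (γ.image ∩ (Ek k ∩ E))) = 0 :=
          fun k => nonpos_iff_eq_zero.1 (hcon k)
        simp [this]
      exact absurd (hzero ▸ hγpos) (lt_irrefl 0)
    set S1 := f '' (γ.image ∩ (Ek k ∩ E)) with hS1def
    have hY := lt_of_lt_of_le hkpos (hausdorff_le_iSup_YCont S1)
    rw [lt_iSup_iff] at hY
    obtain ⟨r, hY⟩ := hY
    rw [lt_iSup_iff] at hY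
    obtain ⟨hr, hY⟩ := hY
    obtain ⟨m, hm⟩ : ∃ m : ℕ, (1 : ℝ≥0∞) / (m + 1) < min r (YCont r S1) := by
      obtain ⟨n₁, hn₁⟩ := ENNReal.exists_inv_nat_lt
        (a := min r (YCont r S1)) (lt_min hr hY).ne'
      refine ⟨n₁, lt_of_le_of_lt ?_ hn₁⟩
      rw [one_div]
      exact ENNReal.inv_le_inv.2 le_self_add
    refine Set.mem_iUnion.2 ⟨(k, m, p), hγΩ, hp.le, ?_⟩
    have h1 : (1 : ℝ≥0∞) / (m + 1) ≤ r := le_of_lt (lt_of_lt_of_le hm (min_le_left _ _))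
    calc (1 : ℝ≥0∞) / (m + 1) < YCont r S1 := lt_of_lt_of_le hm (min_le_right _ _)
      _ ≤ YCont ((1 : ℝ≥0∞) / (m + 1)) S1 := YCont_anti h1 S1
  refine le_antisymm ?_ (zero_le)
  calc pModulus 1 μ {γ : Curve X | γ.In Ω ∧ 0 < μH[1] (f '' (γ.image ∩ E))}
      ≤ pModulus 1 μ (⋃ q, T q) := pModulus_mono μ hsub
    _ = 0 := pModulus_iUnion_zero μ T hTzero
end

section
/- Let Ω ⊂ X be open, let f: Ω → Y be continuous, and let γ: [0,ℓ_γ] → Ω be a curve (arc-length parametrized, hence 1-Lipschitz) such that lip_f(γ(t)) < ∞ for all t ∈ A, where A ⊂ [0,ℓ_γ] is Lebesgue measurable. Then ℋ¹(f(γ(A))) ≤ ∫_A lip_f(γ(t)) dt. -/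
open Set Metric MeasureTheory Filter ENNReal NNReal TopologicalSpace

section AuxLemmas

open Filter

variable {X Y : Type*} [MetricSpace X] [MetricSpace Y]

/-- From `elip f Ω x < b` one gets arbitrarily small radii `ρ` on which
`f` is `b`-Lipschitz-controlled around `x` (within `Ω`). -/
private lemma fine_of_elip_lt (f : X → Y) (Ω : Set X) (x : X) (b : ℝ≥0)
    (hb : elip f Ω x < b) {δ : ℝ} (hδ : 0 < δ) :
    ∃ ρ : ℝ, 0 < ρ ∧ ρ < δ ∧ ∀ y ∈ Ω, dist y x ≤ ρ →
      edist (f y) (f x) ≤ (b : ℝ≥0∞) * ENNReal.ofReal ρ := by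
  obtain ⟨c, hc1, hc2⟩ := exists_between hb
  have hctop : c ≠ ⊤ := (hc2.trans_le le_top).ne
  have hc0 : 0 < c := (zero_le).trans_lt hc1
  have hb0 : (0 : ℝ≥0) < b := by
    rcases eq_or_lt_of_le (show (0:ℝ≥0) ≤ b from zero_le) with h | h
    · exfalso; rw [← h] at hc2; simp at hc2
    · exact h
  set θ : ℝ := c.toReal / b with hθdef
  have hcR : 0 < c.toReal := ENNReal.toReal_pos hc0.ne' hctop
  have hθ0 : 0 < θ := div_pos hcR (by exact_mod_cast hb0)
  have hθ1 : θ < 1 := by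
    rw [div_lt_one (by exact_mod_cast hb0)]
    have := (ENNReal.toReal_lt_toReal hctop (by simp)).2 hc2
    simpa using this
  have hfreq : ∃ᶠ r in nhdsWithin (0:ℝ) (Set.Ioi 0),
      (⨆ (y : X) (_ : y ∈ Ω ∩ Metric.ball x r), edist (f y) (f x)) / ENNReal.ofReal r < c :=
    Filter.frequently_lt_of_liminf_lt (by isBoundedDefault) hc1
  have hev : ∀ᶠ r in nhdsWithin (0:ℝ) (Set.Ioi 0), r < δ ∧ 0 < r := by
    filter_upwards [eventually_nhdsWithin_of_eventually_nhds
      (Filter.Tendsto.eventually_lt_const hδ Filter.tendsto_id), self_mem_nhdsWithin] with r h1 h2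
    exact ⟨h1, h2⟩
  obtain ⟨r, hΨ, hrδ, hr0⟩ := (hfreq.and_eventually hev).exists
  refine ⟨θ * r, mul_pos hθ0 hr0, by nlinarith, ?_⟩
  intro y hy hdy
  have hρr : θ * r < r := by nlinarith
  have hmem : y ∈ Ω ∩ Metric.ball x r := ⟨hy, by
    simp only [Metric.mem_ball]; linarith⟩
  have hle : edist (f y) (f x) ≤
      ⨆ (y : X) (_ : y ∈ Ω ∩ Metric.ball x r), edist (f y) (f x) :=
    le_iSup₂ (f := fun y (_ : y ∈ Ω ∩ Metric.ball x r) => edist (f y) (f x)) y hmem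
  have hS : (⨆ (y : X) (_ : y ∈ Ω ∩ Metric.ball x r), edist (f y) (f x))
      < c * ENNReal.ofReal r := by
    rwa [ENNReal.div_lt_iff (Or.inl (by positivity)) (Or.inl (by simp))] at hΨ
  have key : c * ENNReal.ofReal r = (b : ℝ≥0∞) * ENNReal.ofReal (θ * r) := by
    rw [← ENNReal.ofReal_toReal hctop, ← ENNReal.ofReal_coe_nnreal,
      ← ENNReal.ofReal_mul (by positivity)]
    rw [← ENNReal.ofReal_mul (by positivity)]
    congr 1
    field_simp [hθdef]
    rw [hθdef]
    have hb' : (b:ℝ) ≠ 0 := by exact_mod_cast hb0.ne'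
    field_simp
  exact hle.trans (hS.le.trans key.le)

/-- Covering lemma: if around every point of `S` there are arbitrarily small radii `ρ`
with `edist (g s) (g t) ≤ C ρ` for all `s ∈ S` with `|s - t| ≤ ρ`, then
`μH[1] (g '' S) ≤ C * volume S`. -/
private lemma lemA {Y : Type*} [MetricSpace Y] [MeasurableSpace Y] [BorelSpace Y]
    (g : ℝ → Y) (S : Set ℝ) (C : ℝ≥0)
    (hfine : ∀ t ∈ S, ∀ δ : ℝ, 0 < δ → ∃ ρ : ℝ, 0 < ρ ∧ ρ < δ ∧
      ∀ s ∈ S, |s - t| ≤ ρ → edist (g s) (g t) ≤ (C : ℝ≥0∞) * ENNReal.ofReal ρ) :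
    μH[1] (g '' S) ≤ (C : ℝ≥0∞) * volume S := by
  refine ENNReal.le_of_forall_pos_le_add fun ε hε _ => ?_
  set ε' : ℝ≥0∞ := (ε : ℝ≥0∞) / ((C : ℝ≥0∞) + 1) with hε'def
  have hε'0 : ε' ≠ 0 := by
    simp only [hε'def, ne_eq, ENNReal.div_eq_zero_iff, not_or]
    exact ⟨by exact_mod_cast hε.ne', by simp⟩
  have hCε' : (C : ℝ≥0∞) * ε' ≤ ε := by
    refine le_trans ?_ (ENNReal.mul_div_le (a := (C : ℝ≥0∞) + 1) (b := (ε : ℝ≥0∞)))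
    rw [hε'def]; gcongr; exact le_self_add
  set F : ℕ → ℝ → Set ℝ := fun n t =>
    {ρ : ℝ | 0 < ρ ∧ ρ < 1 / (n + 1) ∧
      ∀ s ∈ S, |s - t| ≤ ρ → edist (g s) (g t) ≤ (C : ℝ≥0∞) * ENNReal.ofReal ρ} with hF
  have hFne : ∀ n : ℕ, ∀ t ∈ S, ∀ δ : ℝ, 0 < δ → (F n t ∩ Set.Ioo 0 δ).Nonempty := by
    intro n t ht δ hδ
    obtain ⟨ρ, h1, h2, h3⟩ := hfine t ht (min δ (1 / (n + 1)))
      (lt_min hδ (by positivity))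
    exact ⟨ρ, ⟨h1, h2.trans_le (min_le_right _ _), h3⟩, h1, h2.trans_le (min_le_left _ _)⟩
  have hBes : ∀ n : ℕ, ∃ (T : Set ℝ) (rad : ℝ → ℝ), T.Countable ∧ T ⊆ S ∧
      (∀ x ∈ T, rad x ∈ F n x) ∧ (S ⊆ ⋃ x ∈ T, Metric.closedBall x (rad x)) ∧
      (∑' x : T, volume (Metric.closedBall (x : ℝ) (rad x))) ≤ volume S + ε' := fun n =>
    Besicovitch.exists_closedBall_covering_tsum_measure_le volume hε'0 (F n) S (hFne n)
  choose T rad hTc hTS hrad hcov hsum using hBes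
  haveI : ∀ n, Countable (T n) := fun n => (hTc n).to_subtype
  have key := MeasureTheory.Measure.hausdorffMeasure_le_liminf_tsum (ι := fun n => (T n : Type))
    1 (g '' S) (l := atTop)
    (fun n : ℕ => 2 * (C : ℝ≥0∞) * ENNReal.ofReal (1 / (n + 1)))
    ?_ (fun n x => g '' (S ∩ Metric.closedBall (x : ℝ) (rad n x))) ?_ ?_
  · refine key.trans ?_
    refine Filter.liminf_le_of_frequently_le (Filter.Frequently.of_forall fun n => ?_)
      (by isBoundedDefault)
    calc ∑' (x : T n), EMetric.diam (g '' (S ∩ Metric.closedBall (x : ℝ) (rad n x))) ^ (1:ℝ)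
        ≤ ∑' (x : T n), (C : ℝ≥0∞) * volume (Metric.closedBall (x : ℝ) (rad n x)) := by
          refine ENNReal.tsum_le_tsum fun x => ?_
          rw [ENNReal.rpow_one]
          obtain ⟨hρ0, _, hρb⟩ := hrad n x x.2
          have hd : EMetric.diam (g '' (S ∩ Metric.closedBall (x : ℝ) (rad n x))) ≤
              (C : ℝ≥0∞) * (2 * ENNReal.ofReal (rad n x)) := by
            refine EMetric.diam_le ?_
            rintro a ⟨s, ⟨hsS, hs⟩, rfl⟩ b ⟨s', ⟨hs'S, hs'⟩, rfl⟩
            calc edist (g s) (g s') ≤ edist (g s) (g (x : ℝ)) + edist (g (x:ℝ)) (g s') :=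
                edist_triangle _ _ _
            _ ≤ (C : ℝ≥0∞) * ENNReal.ofReal (rad n x)
                + (C : ℝ≥0∞) * ENNReal.ofReal (rad n x) := by
                gcongr
                · exact hρb s hsS (by simpa [Real.dist_eq] using hs)
                · rw [edist_comm]
                  exact hρb s' hs'S (by simpa [Real.dist_eq] using hs')
            _ = (C : ℝ≥0∞) * (2 * ENNReal.ofReal (rad n x)) := by ring
          refine hd.trans_eq ?_
          rw [Real.volume_closedBall, ENNReal.ofReal_mul (by norm_num : (0:ℝ) ≤ 2),
            ENNReal.ofReal_ofNat]
    _ = (C : ℝ≥0∞) * ∑' (x : T n), volume (Metric.closedBall (x : ℝ) (rad n x)) := by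
        rw [ENNReal.tsum_mul_left]
    _ ≤ (C : ℝ≥0∞) * (volume S + ε') := by gcongr; exact hsum n
    _ = (C : ℝ≥0∞) * volume S + (C : ℝ≥0∞) * ε' := mul_add _ _ _
    _ ≤ (C : ℝ≥0∞) * volume S + ε := by gcongr
  · have h1 : Filter.Tendsto (fun n : ℕ => (1 : ℝ) / (n + 1)) atTop (nhds 0) :=
      tendsto_one_div_add_atTop_nhds_zero_nat
    have h2 : Filter.Tendsto (fun n : ℕ => ENNReal.ofReal (1 / (n + 1))) atTop (nhds 0) := by
      simpa using ENNReal.tendsto_ofReal h1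
    simpa using ENNReal.Tendsto.const_mul (a := 2*(C:ℝ≥0∞)) h2 (Or.inr (by finiteness))
  · refine Filter.Eventually.of_forall fun n => fun x => ?_
    obtain ⟨hρ0, hρsmall, hρb⟩ := hrad n x x.2
    refine EMetric.diam_le ?_
    rintro a ⟨s, ⟨hsS, hs⟩, rfl⟩ b ⟨s', ⟨hs'S, hs'⟩, rfl⟩
    calc edist (g s) (g s') ≤ edist (g s) (g (x : ℝ)) + edist (g (x:ℝ)) (g s') :=
        edist_triangle _ _ _
    _ ≤ (C : ℝ≥0∞) * ENNReal.ofReal (rad n x) + (C : ℝ≥0∞) * ENNReal.ofReal (rad n x) := by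
        gcongr
        · exact hρb s hsS (by simpa [Real.dist_eq] using hs)
        · rw [edist_comm]
          exact hρb s' hs'S (by simpa [Real.dist_eq] using hs')
    _ = 2 * (C : ℝ≥0∞) * ENNReal.ofReal (rad n x) := by ring
    _ ≤ 2 * (C : ℝ≥0∞) * ENNReal.ofReal (1 / (n + 1)) := by gcongr
  · refine Filter.Eventually.of_forall fun n => ?_
    rintro a ⟨t, ht, rfl⟩
    obtain ⟨x, hx, hmem⟩ := by simpa using hcov n ht
    exact Set.mem_iUnion.2 ⟨⟨x, hx⟩, ⟨t, ⟨ht, hmem⟩, rfl⟩⟩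

/-- `elip` can be computed with rational radii. -/
private lemma elip_eq_rat (f : X → Y) (Ω : Set X) (x : X) :
    elip f Ω x = ⨆ (δ : ℚ) (_ : 0 < δ), ⨅ (q : ℚ) (_ : 0 < q) (_ : q < δ),
      (⨆ (y : X) (_ : y ∈ Ω ∩ Metric.ball x (q : ℝ)), edist (f y) (f x)) /
        ENNReal.ofReal (q : ℝ) := by
  set ψ : ℝ → ℝ≥0∞ := fun r =>
    (⨆ (y : X) (_ : y ∈ Ω ∩ Metric.ball x r), edist (f y) (f x)) / ENNReal.ofReal r with hψ
  set Sb : ℝ → ℝ≥0∞ := fun r => ⨆ (y : X) (_ : y ∈ Ω ∩ Metric.ball x r), edist (f y) (f x)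
    with hSb
  have hbasis : elip f Ω x = ⨆ (δ : ℝ) (_ : 0 < δ), ⨅ r ∈ Set.Ioo (0:ℝ) δ, ψ r :=
    (nhdsGT_basis (0:ℝ)).liminf_eq_iSup_iInf
  have key : ∀ δ : ℚ, 0 < δ → ∀ r ∈ Set.Ioo (0:ℝ) (δ:ℝ),
      (⨅ (q : ℚ) (_ : 0 < q) (_ : q < δ), ψ q) ≤ ψ r := by
    intro δ hδQ r hr
    have hδ : (0:ℝ) < (δ:ℝ) := by exact_mod_cast hδQ
    obtain ⟨hr0, hrδ⟩ := hr
    have hex : ∀ k : ℕ, ∃ q : ℚ, max (r/2) (r - 1/(k+1)) < (q:ℝ) ∧ (q:ℝ) < r :=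
      fun k => exists_rat_btwn (by
        apply max_lt (by linarith) (by
          have : (0:ℝ) < 1/(k+1) := by positivity
          linarith))
    choose qs hq1 hq2 using hex
    have hq0 : ∀ k, (0:ℝ) < qs k := fun k =>
      lt_trans (by linarith) ((le_max_left _ _).trans_lt (hq1 k))
    have hqδ : ∀ k, qs k < δ := fun k => by exact_mod_cast (hq2 k).trans hrδ
    have htend : Filter.Tendsto (fun k : ℕ => ((qs k : ℝ))) atTop (nhds r) := by
      have h1 : Filter.Tendsto (fun k : ℕ => r - 1/(k+1 : ℝ)) atTop (nhds r) := by
        have := tendsto_one_div_add_atTop_nhds_zero_nat (𝕜 := ℝ)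
        simpa using Filter.Tendsto.const_sub r this
      refine tendsto_of_tendsto_of_tendsto_of_le_of_le h1 tendsto_const_nhds
        (fun k => ((le_max_right _ _).trans (hq1 k).le)) (fun k => (hq2 k).le)
    have hmono : ∀ k, Sb (qs k) ≤ Sb r := by
      intro k
      refine iSup_mono fun y => ?_
      exact iSup_le fun h => le_iSup_of_le ⟨h.1, Metric.ball_subset_ball (hq2 k).le h.2⟩ le_rfl
    have hv : Filter.Tendsto (fun k => Sb r * (ENNReal.ofReal (qs k))⁻¹) atTop
        (nhds (Sb r * (ENNReal.ofReal r)⁻¹)) := by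
      refine ENNReal.Tendsto.const_mul ?_ (Or.inl ?_)
      · rw [ENNReal.tendsto_inv_iff]
        exact ENNReal.tendsto_ofReal htend
      · simp [ENNReal.inv_ne_zero]
    have hbd : ∀ k, (⨅ (q : ℚ) (_ : 0 < q) (_ : q < δ), ψ q)
        ≤ Sb r * (ENNReal.ofReal (qs k))⁻¹ := by
      intro k
      refine le_trans (iInf₂_le (qs k) (by exact_mod_cast hq0 k)) ?_
      refine le_trans (iInf_le _ (hqδ k)) ?_
      rw [hψ]
      simp only
      rw [div_eq_mul_inv]
      exact mul_le_mul_left (hmono k) _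
    have := ge_of_tendsto hv (Filter.Eventually.of_forall hbd)
    rw [hψ]
    simpa [div_eq_mul_inv, hψ, hSb] using this
  rw [hbasis]
  apply le_antisymm
  · refine iSup₂_le fun δ hδ => ?_
    obtain ⟨δ', hδ'1, hδ'2⟩ := exists_rat_btwn hδ
    have hδ'0 : 0 < δ' := by exact_mod_cast hδ'1
    refine le_trans ?_ (le_iSup₂ (f := fun (δ : ℚ) (_ : 0 < δ) =>
      ⨅ (q : ℚ) (_ : 0 < q) (_ : q < δ), ψ (q:ℝ)) δ' hδ'0)
    refine le_iInf₂ fun q hq => le_iInf fun hqδ' => ?_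
    refine iInf₂_le (q : ℝ) ⟨by exact_mod_cast hq, ?_⟩
    calc (q:ℝ) < (δ':ℝ) := by exact_mod_cast hqδ'
      _ < δ := hδ'2
  · refine iSup₂_le fun δ hδ => ?_
    have hδR : (0:ℝ) < (δ:ℝ) := by exact_mod_cast hδ
    refine le_trans ?_ (le_iSup₂ (f := fun (δ:ℝ) (_ : 0 < δ) =>
      ⨅ r ∈ Set.Ioo (0:ℝ) δ, ψ r) (δ:ℝ) hδR)
    exact le_iInf₂ fun r hr => key δ hδ r hr

/-- Measurability of `elip` along a continuous curve. -/
private lemma measurable_elip_comp (f : X → Y) (Ω : Set X) {γ' : ℝ → X}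
    (hγ' : Continuous γ') (hfγ : Continuous fun t => f (γ' t)) :
    Measurable fun t : ℝ => elip f Ω (γ' t) := by
  simp_rw [elip_eq_rat f Ω]
  refine Measurable.iSup fun δ => Measurable.iSup fun _ => ?_
  refine Measurable.iInf fun q => Measurable.iInf fun _ => Measurable.iInf fun _ => ?_
  refine Measurable.div ?_ measurable_const
  have lsc : LowerSemicontinuous fun t : ℝ =>
      ⨆ (y : X) (_ : y ∈ Ω ∩ Metric.ball (γ' t) (q : ℝ)), edist (f y) (f (γ' t)) := by
    intro t c hc
    simp only [gt_iff_lt] at hc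
    rw [lt_iSup_iff] at hc
    obtain ⟨y, hc⟩ := hc
    rw [lt_iSup_iff] at hc
    obtain ⟨⟨hyΩ, hyb⟩, hlt⟩ := hc
    have hctop : c ≠ ⊤ := (hlt.trans_le le_top).ne
    have hD : c.toReal < dist (f y) (f (γ' t)) := by
      rw [edist_dist] at hlt
      exact (ENNReal.lt_ofReal_iff_toReal_lt hctop).1 hlt
    have ev1 : ∀ᶠ t' in nhds t, dist y (γ' t') < (q : ℝ) :=
      Filter.Tendsto.eventually_lt_const (Metric.mem_ball.1 hyb)
        ((continuous_const.dist hγ').tendsto t)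
    have ev2 : ∀ᶠ t' in nhds t, c.toReal < dist (f y) (f (γ' t')) :=
      Filter.Tendsto.eventually_const_lt hD ((continuous_const.dist hfγ).tendsto t)
    filter_upwards [ev1, ev2] with t' h1 h2
    have hlt' : c < edist (f y) (f (γ' t')) := by
      rw [edist_dist]
      exact (ENNReal.lt_ofReal_iff_toReal_lt hctop).2 h2
    exact hlt'.trans_le (le_iSup₂ (f := fun y (_ : y ∈ Ω ∩ Metric.ball (γ' t') (q:ℝ)) =>
      edist (f y) (f (γ' t'))) y ⟨hyΩ, Metric.mem_ball.2 h1⟩)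
  exact lsc.measurable

/-- Decomposition of a finite `ℝ≥0∞` value into an `ε`-slice. -/
private lemma exists_slice_aux (v : ℝ≥0∞) (hv : v ≠ ⊤) (ε : ℝ≥0) (hε : 0 < ε) :
    ∃ n : ℕ, (n : ℝ≥0∞) * ε ≤ v ∧ v < ((n : ℝ≥0∞) + 1) * ε := by
  classical
  have hex : ∃ n : ℕ, v < ((n : ℝ≥0∞) + 1) * ε := by
    obtain ⟨n, hn⟩ := ENNReal.exists_nat_gt (r := v / ε)
      (by simp [ENNReal.div_eq_top, hv, hε.ne'])
    have hvn : v < (n : ℝ≥0∞) * ε := by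
      rwa [ENNReal.div_lt_iff (Or.inl (by exact_mod_cast hε.ne')) (Or.inl (by simp))] at hn
    exact ⟨n, hvn.trans_le (mul_le_mul_left le_self_add _)⟩
  refine ⟨Nat.find hex, ?_, Nat.find_spec hex⟩
  rcases Nat.eq_zero_or_pos (Nat.find hex) with h0 | hpos
  · rw [h0]; simp
  · obtain ⟨m, hm⟩ := Nat.exists_eq_succ_of_ne_zero hpos.ne'
    have := Nat.find_min hex (m := m) (by omega)
    rw [not_lt] at this
    refine le_trans (le_of_eq ?_) this
    rw [hm]
    push_cast
    ring

end AuxLemmas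

/-- Lemma 4.9: absolute continuity along a curve, via `lip_f`. -/
theorem hausdorff_image_along_curve_le_integral_lip
    {X Y : Type*} [MetricSpace X]
    [MetricSpace Y] [MeasurableSpace Y] [BorelSpace Y] [TopologicalSpace.SeparableSpace Y]
    (Ω : Set X) (hΩopen : IsOpen Ω)
    (f : X → Y) (hf : ContinuousOn f Ω)
    (γ : Curve X) (hγ : γ.In Ω)
    (A : Set ℝ) (hA : NullMeasurableSet A volume) (hAsub : A ⊆ Set.Icc 0 γ.len)
    (hliploc : ∀ t ∈ A, elip f Ω (γ.toFun t) < ⊤) :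
    μH[1] (f '' (γ.toFun '' A)) ≤ ∫⁻ t in A, elip f Ω (γ.toFun t) := by
  classical
  set g : ℝ → Y := fun t => f (γ.toFun t) with hg
  set proj : ℝ → ℝ := fun t => max 0 (min γ.len t) with hproj
  have hprojmem : ∀ t, proj t ∈ Set.Icc (0:ℝ) γ.len := fun t =>
    ⟨le_max_left _ _, max_le γ.len_nonneg (min_le_left _ _)⟩
  have hprojcont : Continuous proj := continuous_const.max (continuous_const.min continuous_id)
  set γ' : ℝ → X := fun t => γ.toFun (proj t) with hγ'def
  have hγ'cont : Continuous γ' :=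
    γ.lipschitz.continuousOn.comp_continuous hprojcont hprojmem
  have hγ'Ω : ∀ t, γ' t ∈ Ω := fun t => hγ _ (hprojmem t)
  have hfγcont : Continuous fun t => f (γ' t) :=
    hf.comp_continuous hγ'cont hγ'Ω
  set L : ℝ → ℝ≥0∞ := fun t => elip f Ω (γ' t) with hLdef
  have hLmeas : Measurable L := measurable_elip_comp f Ω hγ'cont hfγcont
  have hγ'eq : ∀ t ∈ Set.Icc (0:ℝ) γ.len, γ' t = γ.toFun t := by
    intro t ht
    simp only [hγ'def, hproj]
    rw [min_eq_right ht.2, max_eq_right ht.1]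
  have hLA : ∀ t ∈ A, L t = elip f Ω (γ.toFun t) := fun t ht => by
    rw [hLdef]; simp only; rw [hγ'eq t (hAsub ht)]
  rw [Set.image_image]
  refine ENNReal.le_of_forall_pos_le_add fun ε₀ hε₀ _ => ?_
  set ε : ℝ≥0 := ε₀ / (γ.len.toNNReal + 1) with hεdef
  have hεpos : 0 < ε := by
    rw [hεdef]; positivity
  set An : ℕ → Set ℝ := fun n =>
    A ∩ L ⁻¹' Set.Ico ((n : ℝ≥0∞) * ε) (((n : ℝ≥0∞) + 1) * ε) with hAn
  have hAnm : ∀ n, NullMeasurableSet (An n) volume := fun n =>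
    hA.inter (hLmeas measurableSet_Ico).nullMeasurableSet
  have hAcover : A = ⋃ n, An n := by
    apply Set.Subset.antisymm
    · intro t ht
      have hfin : L t ≠ ⊤ := by rw [hLA t ht]; exact (hliploc t ht).ne
      obtain ⟨n, h1, h2⟩ := exists_slice_aux (L t) hfin ε hεpos
      exact Set.mem_iUnion.2 ⟨n, ht, h1, h2⟩
    · exact Set.iUnion_subset fun n => Set.inter_subset_left
  have hdisj : Pairwise (Function.onFun Disjoint An) := by
    have key : ∀ m n : ℕ, m < n → Disjoint (An m) (An n) := by
      intro m n hlt
      refine Set.disjoint_left.2 fun t htm htn => ?_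
      have h1 : L t < ((m:ℝ≥0∞)+1) * ε := htm.2.2
      have h2 : ((n:ℝ≥0∞)) * ε ≤ L t := htn.2.1
      have hcast : ((m:ℝ≥0∞)+1) ≤ (n:ℝ≥0∞) := by
        have h3 : ((m+1 : ℕ) : ℝ≥0∞) ≤ (n : ℝ≥0∞) := Nat.cast_le.2 (Nat.succ_le_of_lt hlt)
        push_cast at h3
        exact h3
      have : L t < L t := h1.trans_le (le_trans (mul_le_mul_left hcast _) h2)
      exact absurd this (lt_irrefl _)
    intro m n hmn
    rcases hmn.lt_or_gt with h | h
    · exact key m n h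
    · exact (key n m h).symm
  have hpiece : ∀ n : ℕ, μH[1] (g '' An n) ≤ (((n:ℝ≥0∞)+1) * ε) * volume (An n) := by
    intro n
    have hcoe : ((((n:ℝ≥0)+1) * ε : ℝ≥0) : ℝ≥0∞) = ((n:ℝ≥0∞)+1) * (ε : ℝ≥0∞) := by
      push_cast; ring
    have hfine : ∀ t ∈ An n, ∀ δ : ℝ, 0 < δ → ∃ ρ : ℝ, 0 < ρ ∧ ρ < δ ∧
        ∀ s ∈ An n, |s - t| ≤ ρ →
          edist (g s) (g t) ≤ ((((n:ℝ≥0)+1) * ε : ℝ≥0) : ℝ≥0∞) * ENNReal.ofReal ρ := by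
      intro t ht δ hδ
      have hlt : elip f Ω (γ.toFun t) < ((((n:ℝ≥0)+1) * ε : ℝ≥0) : ℝ≥0∞) := by
        rw [← hLA t ht.1, hcoe]
        exact ht.2.2
      obtain ⟨ρ, hρ0, hρδ, hb⟩ := fine_of_elip_lt f Ω (γ.toFun t) _ hlt hδ
      refine ⟨ρ, hρ0, hρδ, fun s hs hdist => ?_⟩
      refine hb (γ.toFun s) (hγ _ (hAsub hs.1)) ?_
      have hds : dist (γ.toFun s) (γ.toFun t) ≤ 1 * dist s t :=
        LipschitzOnWith.dist_le_mul γ.lipschitz s (hAsub hs.1) t (hAsub ht.1)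
      rw [one_mul, Real.dist_eq] at hds
      exact hds.trans hdist
    have := lemA g (An n) (((n:ℝ≥0)+1) * ε) hfine
    rwa [hcoe] at this
  have hsum1 : ∀ n : ℕ, (n:ℝ≥0∞) * ε * volume (An n) ≤ ∫⁻ t in An n, L t := by
    intro n
    rw [← setLIntegral_const (An n) ((n:ℝ≥0∞) * ε)]
    refine lintegral_mono_ae ?_
    filter_upwards [ae_restrict_mem₀ (hAnm n)] with t ht
    exact ht.2.1
  have hvolA : ∑' n, volume (An n) = volume A := by
    rw [hAcover, measure_iUnion₀ (hdisj.mono fun _ _ h => h.aedisjoint) hAnm]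
  have hεbound : (ε : ℝ≥0∞) * volume A ≤ ε₀ := by
    have hA' : volume A ≤ ENNReal.ofReal γ.len := by
      refine le_trans (measure_mono hAsub) ?_
      rw [Real.volume_Icc, sub_zero]
    calc (ε : ℝ≥0∞) * volume A ≤ (ε : ℝ≥0∞) * ENNReal.ofReal γ.len := by gcongr
    _ = ((ε * γ.len.toNNReal : ℝ≥0) : ℝ≥0∞) := by
        rw [ENNReal.ofReal, ENNReal.coe_mul]
    _ ≤ (ε₀ : ℝ≥0∞) := by
        refine ENNReal.coe_le_coe.2 ?_
        rw [hεdef]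
        calc ε₀ / (γ.len.toNNReal + 1) * γ.len.toNNReal
            ≤ ε₀ / (γ.len.toNNReal + 1) * (γ.len.toNNReal + 1) := by
              gcongr; exact le_self_add
        _ = ε₀ := div_mul_cancel₀ _ (by positivity)
  calc μH[1] (g '' A) = μH[1] (⋃ n, g '' An n) := by rw [hAcover, Set.image_iUnion]
  _ ≤ ∑' n, μH[1] (g '' An n) := measure_iUnion_le _
  _ ≤ ∑' n : ℕ, (((n:ℝ≥0∞)+1) * ε) * volume (An n) := ENNReal.tsum_le_tsum hpiece
  _ = ∑' n : ℕ, ((n:ℝ≥0∞) * ε * volume (An n) + (ε:ℝ≥0∞) * volume (An n)) := by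
      refine tsum_congr fun n => ?_
      ring
  _ = (∑' n : ℕ, (n:ℝ≥0∞) * ε * volume (An n)) + (ε:ℝ≥0∞) * ∑' n, volume (An n) := by
      rw [ENNReal.tsum_add, ENNReal.tsum_mul_left]
  _ ≤ (∫⁻ t in A, L t) + ε₀ := by
      gcongr
      · calc ∑' n : ℕ, (n:ℝ≥0∞) * ε * volume (An n) ≤ ∑' n, ∫⁻ t in An n, L t :=
            ENNReal.tsum_le_tsum hsum1
        _ = ∫⁻ t in ⋃ n, An n, L t :=
            (lintegral_iUnion₀ hAnm (hdisj.mono fun _ _ h => h.aedisjoint) L).symm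
        _ = ∫⁻ t in A, L t := by rw [← hAcover]
      · rw [hvolA] at *
        exact hεbound
  _ = (∫⁻ t in A, elip f Ω (γ.toFun t)) + ε₀ := by
      congr 1
      refine lintegral_congr_ae ?_
      filter_upwards [ae_restrict_mem₀ hA] with t ht
      exact hLA t ht
end
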